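/- arXiv:2303.10997 — 8 statements merged into one kernel-verified Lean document; each statement's English description precedes it below -/
import Mathlib

section
/- Let I be a nonempty open real interval, M : I² → I a strict mean on I, f : I → ℝ a continuous strictly monotone function, and p = (p₁,p₂) : I → ℝ₊². Assume there exists an open set U ⊆ I² containing the diagonal diag(I²) = {(x,x) : x ∈ I} such that A_{f,p} = M holds on U. If M is separately continuous on U (i.e., continuous in each variable separately), then p₁ and p₂ are continuous on I. -/
open Set

/-- The 2-variable generalized Bajraktarević mean
`A_{f,p}(x,y) = f⁻¹((p₁(x)f(x)+p₂(y)f(y))/(p₁(x)+p₂(y)))`,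
where the inverse of `f` is taken on the interval `I`. -/
noncomputable def bajMean (I : Set ℝ) (f p₁ p₂ : ℝ → ℝ) (x y : ℝ) : ℝ :=
  Function.invFunOn f I ((p₁ x * f x + p₂ y * f y) / (p₁ x + p₂ y))

theorem stmt0 (I : Set ℝ) (hIopen : IsOpen I) (hIne : I.Nonempty) (hIconn : I.OrdConnected)
    (f p₁ p₂ : ℝ → ℝ)
    (hfc : ContinuousOn f I)
    (hfm : StrictMonoOn f I ∨ StrictAntiOn f I)
    (hp : ∀ x ∈ I, 0 < p₁ x ∧ 0 < p₂ x)
    (M : ℝ → ℝ → ℝ)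
    (hMmaps : ∀ x ∈ I, ∀ y ∈ I, M x y ∈ I)
    (hMstrict : ∀ x ∈ I, ∀ y ∈ I, x ≠ y → min x y < M x y ∧ M x y < max x y)
    (U : Set (ℝ × ℝ)) (hUopen : IsOpen U) (hUsub : U ⊆ I ×ˢ I)
    (hUdiag : ∀ x ∈ I, (x, x) ∈ U)
    (hAM : ∀ u ∈ U, bajMean I f p₁ p₂ u.1 u.2 = M u.1 u.2)
    (hMsepcont : ∀ u ∈ U, ContinuousAt (fun t => M t u.2) u.1 ∧
      ContinuousAt (fun t => M u.1 t) u.2) :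
    ContinuousOn p₁ I ∧ ContinuousOn p₂ I := by
  have hinj : Set.InjOn f I := hfm.elim (fun h => h.injOn) (fun h => h.injOn)
  have himg : (f '' I).OrdConnected :=
    (hIconn.isPreconnected.image f hfc).ordConnected
  -- key identity on U
  have hkey : ∀ u ∈ U, p₁ u.1 * (f u.1 - f (M u.1 u.2)) = p₂ u.2 * (f (M u.1 u.2) - f u.2) := by
    rintro ⟨x, y⟩ hu
    obtain ⟨hx, hy⟩ := hUsub hu
    obtain ⟨hp1, -⟩ := hp x hx
    obtain ⟨-, hp2⟩ := hp y hy
    set a := p₁ x with ha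
    set b := p₂ y with hb
    have hab : 0 < a + b := by linarith
    have havg : (a * f x + b * f y) / (a + b) ∈ f '' I := by
      rcases le_total (f x) (f y) with h | h
      · refine himg.out (mem_image_of_mem f hx) (mem_image_of_mem f hy) ?_
        constructor
        · rw [le_div_iff₀ hab]; nlinarith
        · rw [div_le_iff₀ hab]; nlinarith
      · refine himg.out (mem_image_of_mem f hy) (mem_image_of_mem f hx) ?_
        constructor
        · rw [le_div_iff₀ hab]; nlinarith
        · rw [div_le_iff₀ hab]; nlinarith
    have hfeq : f (M x y) = (a * f x + b * f y) / (a + b) := by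
      have h1 : f (Function.invFunOn f I ((a * f x + b * f y) / (a + b)))
          = (a * f x + b * f y) / (a + b) := by
        obtain ⟨c, hc, hfc'⟩ := havg
        exact Function.invFunOn_eq ⟨c, hc, hfc'⟩
      have h2 := hAM (x, y) hu
      simp only [bajMean] at h2
      rw [← h2]
      exact h1
    rw [eq_div_iff hab.ne'] at hfeq
    dsimp only
    nlinarith [hfeq]
  have hMne1 : ∀ x ∈ I, ∀ y ∈ I, x ≠ y → M x y ≠ x := by
    intro x hx y hy hxy
    obtain ⟨h1, h2⟩ := hMstrict x hx y hy hxy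
    rcases lt_or_gt_of_ne hxy with h | h
    · rw [min_eq_left h.le] at h1; exact h1.ne'
    · rw [max_eq_left h.le] at h2; exact h2.ne
  have hMne2 : ∀ x ∈ I, ∀ y ∈ I, x ≠ y → M x y ≠ y := by
    intro x hx y hy hxy
    obtain ⟨h1, h2⟩ := hMstrict x hx y hy hxy
    rcases lt_or_gt_of_ne hxy with h | h
    · rw [max_eq_right h.le] at h2; exact h2.ne
    · rw [min_eq_right h.le] at h1; exact h1.ne'
  constructor
  · -- continuity of p₁
    intro x₀ hx₀
    obtain ⟨δ, hδ, hball⟩ := Metric.isOpen_iff.mp hUopen (x₀, x₀) (hUdiag x₀ hx₀)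
    set y := x₀ + δ / 2 with hy_def
    have hyU : ∀ x, |x - x₀| < δ → (x, y) ∈ U := by
      intro x hxd
      apply hball
      rw [Metric.mem_ball, Prod.dist_eq]
      apply max_lt
      · rwa [Real.dist_eq]
      · rw [Real.dist_eq, hy_def]
        rw [show x₀ + δ / 2 - x₀ = δ / 2 by ring, abs_of_pos (by linarith)]
        linarith
    have hx0y : (x₀, y) ∈ U := hyU x₀ (by simp [hδ])
    have hyI : y ∈ I := (hUsub hx0y).2
    have hx0ne : x₀ ≠ y := by rw [hy_def]; intro h; nlinarith [congrArg (· - x₀) h]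
    have hMmem : M x₀ y ∈ I := hMmaps x₀ hx₀ y hyI
    have hden : f x₀ - f (M x₀ y) ≠ 0 := by
      rw [sub_ne_zero]
      intro h
      exact hMne1 x₀ hx₀ y hyI hx0ne (hinj hx₀ hMmem h).symm
    have hMc : ContinuousAt (fun t => M t y) x₀ := (hMsepcont (x₀, y) hx0y).1
    have hfMc : ContinuousAt (fun t => f (M t y)) x₀ :=
      ContinuousAt.comp (f := fun t => M t y) (hfc.continuousAt (hIopen.mem_nhds hMmem)) hMc
    have hfx : ContinuousAt f x₀ := hfc.continuousAt (hIopen.mem_nhds hx₀)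
    have hg : ContinuousAt (fun x => p₂ y * (f (M x y) - f y) / (f x - f (M x y))) x₀ :=
      ((continuousAt_const.mul (hfMc.sub continuousAt_const)).div (hfx.sub hfMc) hden)
    have heq : p₁ =ᶠ[nhds x₀] fun x => p₂ y * (f (M x y) - f y) / (f x - f (M x y)) := by
      filter_upwards [Metric.ball_mem_nhds x₀ (by linarith : (0:ℝ) < δ / 2)] with x hx
      rw [Metric.mem_ball, Real.dist_eq] at hx
      have hxU : (x, y) ∈ U := hyU x (by linarith [abs_nonneg (x - x₀)])
      have hxI : x ∈ I := (hUsub hxU).1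
      have hxney : x ≠ y := by
        intro h
        rw [hy_def] at h
        have := abs_lt.mp hx
        linarith [this.1, this.2]
      have hMmem' : M x y ∈ I := hMmaps x hxI y hyI
      have hden' : f x - f (M x y) ≠ 0 := by
        rw [sub_ne_zero]
        intro h
        exact hMne1 x hxI y hyI hxney (hinj hxI hMmem' h).symm
      have hk := hkey (x, y) hxU
      dsimp only at hk
      field_simp
      linarith [hk]
    exact (hg.congr heq.symm).continuousWithinAt
  · -- continuity of p₂
    intro y₀ hy₀
    obtain ⟨δ, hδ, hball⟩ := Metric.isOpen_iff.mp hUopen (y₀, y₀) (hUdiag y₀ hy₀)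
    set z := y₀ + δ / 2 with hz_def
    have hzU : ∀ t, |t - y₀| < δ → (z, t) ∈ U := by
      intro t htd
      apply hball
      rw [Metric.mem_ball, Prod.dist_eq]
      apply max_lt
      · rw [Real.dist_eq, hz_def]
        rw [show y₀ + δ / 2 - y₀ = δ / 2 by ring, abs_of_pos (by linarith)]
        linarith
      · rwa [Real.dist_eq]
    have hzy0 : (z, y₀) ∈ U := hzU y₀ (by simp [hδ])
    have hzI : z ∈ I := (hUsub hzy0).1
    have hy0ne : z ≠ y₀ := by rw [hz_def]; intro h; nlinarith [congrArg (· - y₀) h]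
    have hMmem : M z y₀ ∈ I := hMmaps z hzI y₀ hy₀
    have hden : f (M z y₀) - f y₀ ≠ 0 := by
      rw [sub_ne_zero]
      intro h
      exact hMne2 z hzI y₀ hy₀ hy0ne (hinj hMmem hy₀ h)
    have hMc : ContinuousAt (fun t => M z t) y₀ := (hMsepcont (z, y₀) hzy0).2
    have hfMc : ContinuousAt (fun t => f (M z t)) y₀ :=
      ContinuousAt.comp (f := fun t => M z t) (hfc.continuousAt (hIopen.mem_nhds hMmem)) hMc
    have hfy : ContinuousAt f y₀ := hfc.continuousAt (hIopen.mem_nhds hy₀)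
    have hg : ContinuousAt (fun t => p₁ z * (f z - f (M z t)) / (f (M z t) - f t)) y₀ :=
      ((continuousAt_const.mul (continuousAt_const.sub hfMc)).div (hfMc.sub hfy) hden)
    have heq : p₂ =ᶠ[nhds y₀] fun t => p₁ z * (f z - f (M z t)) / (f (M z t) - f t) := by
      filter_upwards [Metric.ball_mem_nhds y₀ (by linarith : (0:ℝ) < δ / 2)] with t ht
      rw [Metric.mem_ball, Real.dist_eq] at ht
      have htU : (z, t) ∈ U := hzU t (by linarith [abs_nonneg (t - y₀)])
      have htI : t ∈ I := (hUsub htU).2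
      have htnez : z ≠ t := by
        intro h
        rw [hz_def] at h
        have := abs_lt.mp ht
        linarith [this.1, this.2]
      have hMmem' : M z t ∈ I := hMmaps z hzI t htI
      have hden' : f (M z t) - f t ≠ 0 := by
        rw [sub_ne_zero]
        intro h
        exact hMne2 z hzI t htI htnez (hinj hMmem' htI h)
      have hk := hkey (z, t) htU
      dsimp only at hk
      field_simp
      linarith [hk]
    exact (hg.congr heq.symm).continuousWithinAt
end

section
/- Let I be a nonempty open real interval, M : I² → I a strict mean on I, f : I → ℝ a continuous strictly monotone function, and p = (p₁,p₂) : I → ℝ₊². Assume there exists an open set U ⊆ I² containing the diagonal diag(I²) such that A_{f,p} = M holds on U. Let k ∈ ℕ. If M is k times continuously partially differentiable with respect to its first and second variables on U and f is k times continuously differentiable on I, then p₁ and p₂ are k times continuously differentiable on I. -/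
open Set

theorem stmt1 (I : Set ℝ) (hIopen : IsOpen I) (hIne : I.Nonempty) (hIconn : I.OrdConnected)
    (f p₁ p₂ : ℝ → ℝ)
    (hfc : ContinuousOn f I)
    (hfm : StrictMonoOn f I ∨ StrictAntiOn f I)
    (hp : ∀ x ∈ I, 0 < p₁ x ∧ 0 < p₂ x)
    (M : ℝ → ℝ → ℝ)
    (hMmaps : ∀ x ∈ I, ∀ y ∈ I, M x y ∈ I)
    (hMstrict : ∀ x ∈ I, ∀ y ∈ I, x ≠ y → min x y < M x y ∧ M x y < max x y)
    (U : Set (ℝ × ℝ)) (hUopen : IsOpen U) (hUsub : U ⊆ I ×ˢ I)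
    (hUdiag : ∀ x ∈ I, (x, x) ∈ U)
    (hAM : ∀ u ∈ U, bajMean I f p₁ p₂ u.1 u.2 = M u.1 u.2)
    (k : ℕ)
    (hM1 : ∀ y : ℝ, ContDiffOn ℝ k (fun x => M x y) {x | (x, y) ∈ U})
    (hM2 : ∀ x : ℝ, ContDiffOn ℝ k (fun y => M x y) {y | (x, y) ∈ U})
    (hf : ContDiffOn ℝ k f I) :
    ContDiffOn ℝ k p₁ I ∧ ContDiffOn ℝ k p₂ I := by
  have hinj : InjOn f I := hfm.elim (fun h => h.injOn) (fun h => h.injOn)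
  -- image of I under f is OrdConnected
  have himg : (f '' I).OrdConnected := by
    have h1 : IsPreconnected I := (isPreconnected_iff_ordConnected).mpr hIconn
    have h2 : IsPreconnected (f '' I) := h1.image f hfc
    exact (isPreconnected_iff_ordConnected).mp h2
  -- key identity
  have key : ∀ x ∈ I, ∀ y ∈ I, (x, y) ∈ U →
      f (M x y) * (p₁ x + p₂ y) = p₁ x * f x + p₂ y * f y := by
    intro x hx y hy hU
    obtain ⟨hp1, _⟩ := hp x hx
    obtain ⟨_, hp2⟩ := hp y hy
    have hsum : 0 < p₁ x + p₂ y := by linarith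
    set w := (p₁ x * f x + p₂ y * f y) / (p₁ x + p₂ y) with hw
    have hwmem : w ∈ f '' I := by
      have hmem : w ∈ uIcc (f x) (f y) := by
        rcases le_total (f x) (f y) with h | h
        · rw [uIcc_of_le h]
          constructor
          · rw [le_div_iff₀ hsum]; nlinarith
          · rw [div_le_iff₀ hsum]; nlinarith
        · rw [uIcc_of_ge h]
          constructor
          · rw [le_div_iff₀ hsum]; nlinarith
          · rw [div_le_iff₀ hsum]; nlinarith
      exact himg.uIcc_subset (mem_image_of_mem f hx) (mem_image_of_mem f hy) hmem
    obtain ⟨z, hz, hfz⟩ := hwmem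
    have hiv : f (Function.invFunOn f I w) = w :=
      Function.invFunOn_eq ⟨z, hz, hfz⟩
    have hM : f (M x y) = w := by
      rw [← hAM (x, y) hU]; exact hiv
    rw [hM, hw, div_mul_cancel₀ _ (ne_of_gt hsum)]
  -- M x y ≠ x and ≠ y for x ≠ y
  have hMne : ∀ x ∈ I, ∀ y ∈ I, x ≠ y → M x y ≠ x ∧ M x y ≠ y := by
    intro x hx y hy hxy
    obtain ⟨h1, h2⟩ := hMstrict x hx y hy hxy
    refine ⟨fun hh => ?_, fun hh => ?_⟩
    · rw [hh] at h1 h2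
      rcases inf_lt_iff.mp h1 with h | h
      · exact lt_irrefl _ h
      · rcases lt_sup_iff.mp h2 with h' | h'
        · exact lt_irrefl _ h'
        · exact lt_asymm h h'
    · rw [hh] at h1 h2
      rcases inf_lt_iff.mp h1 with h | h
      · rcases lt_sup_iff.mp h2 with h' | h'
        · exact lt_asymm h h'
        · exact lt_irrefl _ h'
      · exact lt_irrefl _ h
  constructor
  · -- p₁
    intro x₀ hx₀
    -- pick y ≠ x₀ with (x₀,y) ∈ U, y ∈ I
    have hWopen : IsOpen {y | (x₀, y) ∈ U} := hUopen.preimage (Continuous.prodMk_right x₀)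
    have hWI : IsOpen ({y | (x₀, y) ∈ U} ∩ I) := hWopen.inter hIopen
    have hx₀W : x₀ ∈ {y | (x₀, y) ∈ U} ∩ I := ⟨hUdiag x₀ hx₀, hx₀⟩
    have hnb : {y | (x₀, y) ∈ U} ∩ I ∈ nhdsWithin x₀ {x₀}ᶜ :=
      mem_nhdsWithin_of_mem_nhds (hWI.mem_nhds hx₀W)
    obtain ⟨y, hyU, hyne⟩ : ∃ y, y ∈ {y | (x₀, y) ∈ U} ∩ I ∧ y ≠ x₀ := by
      obtain ⟨y, hy1, hy2⟩ := Filter.nonempty_of_mem (Filter.inter_mem hnb self_mem_nhdsWithin)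
      exact ⟨y, hy1, hy2⟩
    obtain ⟨hyUmem, hyI⟩ := hyU
    -- V: neighborhood of x₀
    set V := {x | (x, y) ∈ U} ∩ {x | x ≠ y} with hV
    have hVopen : IsOpen V := (hUopen.preimage (continuous_id.prodMk continuous_const)).inter isOpen_ne
    have hx₀V : x₀ ∈ V := ⟨hyUmem, hyne.symm⟩
    have hVI : V ⊆ I := fun x hx => (hUsub hx.1).1
    -- f(M x y) ≠ f x on V
    have hne : ∀ x ∈ V, f (M x y) - f x ≠ 0 := by
      intro x hx
      have hxI := hVI hx
      have hMI := hMmaps x hxI y hyI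
      have := (hMne x hxI y hyI hx.2).1
      exact sub_ne_zero.mpr (fun h => this (hinj hMI hxI h))
    have hFM : ContDiffOn ℝ k (fun x => f (M x y)) V :=
      hf.comp ((hM1 y).mono (fun x hx => hx.1)) (fun x hx => hMmaps x (hVI hx) y hyI)
    have hfV : ContDiffOn ℝ k f V := hf.mono hVI
    set g := fun x => p₂ y * (f y - f (M x y)) / (f (M x y) - f x) with hg
    have hgC : ContDiffOn ℝ k g V :=
      (contDiffOn_const.mul (contDiffOn_const.sub hFM)).div (hFM.sub hfV) hne
    have heq : ∀ x ∈ V, p₁ x = g x := by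
      intro x hx
      have hxI := hVI hx
      have hk := key x hxI y hyI hx.1
      rw [hg, eq_comm, div_eq_iff (hne x hx)]
      linear_combination -hk
    exact ((hgC.contDiffAt (hVopen.mem_nhds hx₀V)).congr_of_eventuallyEq
      (Filter.eventuallyEq_of_mem (hVopen.mem_nhds hx₀V) heq)).contDiffWithinAt
  · -- p₂
    intro y₀ hy₀
    have hWopen : IsOpen {x | (x, y₀) ∈ U} := hUopen.preimage (continuous_id.prodMk continuous_const)
    have hWI : IsOpen ({x | (x, y₀) ∈ U} ∩ I) := hWopen.inter hIopen
    have hy₀W : y₀ ∈ {x | (x, y₀) ∈ U} ∩ I := ⟨hUdiag y₀ hy₀, hy₀⟩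
    have hnb : {x | (x, y₀) ∈ U} ∩ I ∈ nhdsWithin y₀ {y₀}ᶜ :=
      mem_nhdsWithin_of_mem_nhds (hWI.mem_nhds hy₀W)
    obtain ⟨x, hxU, hxne⟩ : ∃ x, x ∈ {x | (x, y₀) ∈ U} ∩ I ∧ x ≠ y₀ := by
      obtain ⟨x, hx1, hx2⟩ := Filter.nonempty_of_mem (Filter.inter_mem hnb self_mem_nhdsWithin)
      exact ⟨x, hx1, hx2⟩
    obtain ⟨hxUmem, hxI⟩ := hxU
    set V := {y | (x, y) ∈ U} ∩ {y | y ≠ x} with hV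
    have hVopen : IsOpen V := (hUopen.preimage (Continuous.prodMk_right x)).inter isOpen_ne
    have hy₀V : y₀ ∈ V := ⟨hxUmem, hxne.symm⟩
    have hVI : V ⊆ I := fun y hy => (hUsub hy.1).2
    have hne : ∀ y ∈ V, f y - f (M x y) ≠ 0 := by
      intro y hy
      have hyI := hVI hy
      have hMI := hMmaps x hxI y hyI
      have := (hMne x hxI y hyI hy.2.symm).2
      exact sub_ne_zero.mpr (fun h => this (hinj hMI hyI h.symm))
    have hFM : ContDiffOn ℝ k (fun y => f (M x y)) V :=
      hf.comp ((hM2 x).mono (fun y hy => hy.1)) (fun y hy => hMmaps x hxI y (hVI hy))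
    have hfV : ContDiffOn ℝ k f V := hf.mono hVI
    set g := fun y => p₁ x * (f (M x y) - f x) / (f y - f (M x y)) with hg
    have hgC : ContDiffOn ℝ k g V :=
      ((contDiffOn_const.mul (hFM.sub contDiffOn_const))).div (hfV.sub hFM) hne
    have heq : ∀ y ∈ V, p₂ y = g y := by
      intro y hy
      have hyI := hVI hy
      have hk := key x hxI y hyI hy.1
      rw [hg, eq_comm, div_eq_iff (hne y hy)]
      linear_combination hk
    exact ((hgC.contDiffAt (hVopen.mem_nhds hy₀V)).congr_of_eventuallyEq
      (Filter.eventuallyEq_of_mem (hVopen.mem_nhds hy₀V) heq)).contDiffWithinAt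
end

section
/- Let I be a nonempty open real interval, γ ∈ ℝ, and let f : I → ℝ be a three times differentiable function whose first derivative does not vanish on I. Then the following two assertions are equivalent: (i) there exist twice differentiable functions u,v : I → ℝ such that v does not vanish on I, u'' = γu, v'' = γv, and f = u/v on I; (ii) f satisfies the third-order differential equation S(f) = −2γ on I. -/
/-!
If `f = u/v` with `u'' = γu` and `v'' = γv`, the Wronskian `W = u'v - uv'` has `W' = 0`, so
`f' = W/v²` and `f'' = -2Wv'/v³`, and one more differentiation gives `S(f) = -2γ`.
Conversely, by Darboux's theorem `f'` has constant sign `ε` on the interval; then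
`v = (εf')^{-1/2}` satisfies `v'' = -(1/2) S(f) v = γv`, and `u = fv` satisfies `u'' = γu`
because `f''v + 2f'v' = 0`.
-/

open Set

/-- The Schwarzian derivative `S(f) = f'''/f' - (3/2) (f''/f')²`. -/
noncomputable def schwarzian (f : ℝ → ℝ) (x : ℝ) : ℝ :=
  deriv (deriv (deriv f)) x / deriv f x - 3 / 2 * (deriv (deriv f) x / deriv f x) ^ 2

variable {s : Set ℝ} {f f₁ f₂ g g₁ u u₁ v v₁ : ℝ → ℝ} {x c f₃ γ : ℝ}

theorem hasDerivAt_deriv_of_isOpen (hs : IsOpen s) (hf : ∀ y ∈ s, HasDerivAt f (f₁ y) y)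
    (hx : x ∈ s) (hf₁ : HasDerivAt f₁ c x) : HasDerivAt (deriv f) c x :=
  hf₁.congr_of_eventuallyEq <| Filter.eventually_of_mem (hs.mem_nhds hx) fun y hy => (hf y hy).deriv

theorem schwarzian_eq_of_hasDerivAt (hs : IsOpen s) (hf : ∀ y ∈ s, HasDerivAt f (f₁ y) y)
    (hf₁ : ∀ y ∈ s, HasDerivAt f₁ (f₂ y) y) (hx : x ∈ s) (hf₂ : HasDerivAt f₂ f₃ x) :
    schwarzian f x = f₃ / f₁ x - 3 / 2 * (f₂ x / f₁ x) ^ 2 := by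
  have hd₂ : ∀ y ∈ s, HasDerivAt (deriv f) (f₂ y) y :=
    fun y hy => hasDerivAt_deriv_of_isOpen hs hf hy (hf₁ y hy)
  rw [schwarzian, (hf x hx).deriv, (hd₂ x hx).deriv,
    (hasDerivAt_deriv_of_isOpen hs hd₂ hx hf₂).deriv]

theorem schwarzian_eq_of_eqOn_div (hs : IsOpen s) (hu : ∀ y ∈ s, HasDerivAt u (u₁ y) y)
    (hu₁ : ∀ y ∈ s, HasDerivAt u₁ (γ * u y) y) (hv : ∀ y ∈ s, HasDerivAt v (v₁ y) y)
    (hv₁ : ∀ y ∈ s, HasDerivAt v₁ (γ * v y) y) (hv0 : ∀ y ∈ s, v y ≠ 0)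
    (hf : EqOn f (fun y => u y / v y) s) (hx : x ∈ s) (hfx : deriv f x ≠ 0) :
    schwarzian f x = -2 * γ := by
  set W : ℝ → ℝ := fun y => u₁ y * v y - u y * v₁ y
  have hW : ∀ y ∈ s, HasDerivAt W 0 y := fun y hy =>
    (((hu₁ y hy).fun_mul (hv y hy)).fun_sub ((hu y hy).fun_mul (hv₁ y hy))).congr_deriv
      (by ring)
  have hd₁ : ∀ y ∈ s, HasDerivAt f (W y / v y ^ 2) y := fun y hy =>
    ((hu y hy).fun_div (hv y hy) (hv0 y hy)).congr_of_eventuallyEq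
      (hf.eventuallyEq_of_mem (hs.mem_nhds hy))
  have hd₂ : ∀ y ∈ s, HasDerivAt (fun y => W y / v y ^ 2) (-2 * W y * v₁ y / v y ^ 3) y :=
    fun y hy => ((hW y hy).fun_div ((hv y hy).fun_pow 2) (pow_ne_zero 2 (hv0 y hy))).congr_deriv
      (by field_simp [hv0 y hy]; ring)
  have hWx : W x ≠ 0 := by
    rw [(hd₁ x hx).deriv] at hfx
    exact fun h => hfx (by rw [h, zero_div])
  rw [schwarzian_eq_of_hasDerivAt hs hd₁ hd₂ hx ((((hW x hx).const_mul (-2)).fun_mul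
    (hv₁ x hx)).fun_div ((hv x hx).fun_pow 3) (pow_ne_zero 3 (hv0 x hx)))]
  field_simp [hv0 x hx]
  ring

theorem hasDerivAt_inv_sqrt (hg : HasDerivAt g c x) (hx : 0 < g x) :
    HasDerivAt (fun y => (√(g y))⁻¹) (-(c / (2 * g x)) * (√(g x))⁻¹) x := by
  refine ((hg.sqrt hx.ne').fun_inv (Real.sqrt_pos.2 hx).ne').congr_deriv ?_
  rw [Real.sq_sqrt hx.le]
  field_simp

theorem hasDerivAt_deriv_inv_sqrt (hs : IsOpen s) (hg : ∀ y ∈ s, HasDerivAt g (g₁ y) y)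
    (hpos : ∀ y ∈ s, 0 < g y) (hx : x ∈ s) (hg₁ : HasDerivAt g₁ c x) :
    HasDerivAt (deriv fun y => (√(g y))⁻¹)
      (-(1 / 2) * (c / g x - 3 / 2 * (g₁ x / g x) ^ 2) * (√(g x))⁻¹) x := by
  refine hasDerivAt_deriv_of_isOpen hs (fun y hy => hasDerivAt_inv_sqrt (hg y hy) (hpos y hy)) hx ?_
  have hgx := (hpos x hx).ne'
  refine (((hg₁.fun_div ((hg x hx).const_mul 2) (mul_ne_zero two_ne_zero hgx)).fun_neg).fun_mul
    (hasDerivAt_inv_sqrt (hg x hx) (hpos x hx))).congr_deriv ?_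
  field_simp
  ring

theorem exists_pos_mul_deriv_of_ne_zero (hs : s.OrdConnected)
    (hf : ∀ x ∈ s, DifferentiableAt ℝ f x) (hf' : ∀ x ∈ s, deriv f x ≠ 0) :
    ∃ ε : ℝ, ∀ x ∈ s, 0 < ε * deriv f x := by
  rcases hasDerivWithinAt_forall_lt_or_forall_gt_of_forall_ne hs.convex
    (fun x hx => (hf x hx).hasDerivAt.hasDerivWithinAt) hf' with hneg | hpos
  · exact ⟨-1, fun x hx => by linarith [hneg x hx]⟩
  · exact ⟨1, fun x hx => by linarith [hpos x hx]⟩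

theorem exists_eqOn_div_of_schwarzian_eq (hs : IsOpen s)
    (hf1 : ∀ x ∈ s, DifferentiableAt ℝ f x) (hf2 : ∀ x ∈ s, DifferentiableAt ℝ (deriv f) x)
    (hf3 : ∀ x ∈ s, DifferentiableAt ℝ (deriv (deriv f)) x) {ε : ℝ}
    (hε : ∀ x ∈ s, 0 < ε * deriv f x) (hS : ∀ x ∈ s, schwarzian f x = -2 * γ) :
    ∃ u v : ℝ → ℝ, (∀ x ∈ s, DifferentiableAt ℝ u x) ∧
      (∀ x ∈ s, HasDerivAt (deriv u) (γ * u x) x) ∧ (∀ x ∈ s, DifferentiableAt ℝ v x) ∧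
      (∀ x ∈ s, HasDerivAt (deriv v) (γ * v x) x) ∧ (∀ x ∈ s, v x ≠ 0) ∧
      EqOn f (fun x => u x / v x) s := by
  set v : ℝ → ℝ := fun x => (√(ε * deriv f x))⁻¹
  have hεf' : ∀ x ∈ s, HasDerivAt (fun y => ε * deriv f y) (ε * deriv (deriv f) x) x :=
    fun x hx => (hf2 x hx).hasDerivAt.const_mul ε
  have hv : ∀ x ∈ s, HasDerivAt v
      (-(ε * deriv (deriv f) x / (2 * (ε * deriv f x))) * v x) x :=
    fun x hx => hasDerivAt_inv_sqrt (hεf' x hx) (hε x hx)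
  have hv₁ : ∀ x ∈ s, HasDerivAt (deriv v) (γ * v x) x := fun x hx =>
    (hasDerivAt_deriv_inv_sqrt hs hεf' hε hx ((hf3 x hx).hasDerivAt.const_mul ε)).congr_deriv (by
      have hε0 : ε ≠ 0 := left_ne_zero_of_mul (hε x hx).ne'
      rw [mul_div_mul_left _ _ hε0, mul_div_mul_left _ _ hε0, ← schwarzian, hS x hx]
      ring)
  set u : ℝ → ℝ := fun x => f x * v x
  have hu : ∀ x ∈ s, HasDerivAt u (deriv f x * v x + f x * deriv v x) x :=
    fun x hx => (hf1 x hx).hasDerivAt.fun_mul (hv x hx).differentiableAt.hasDerivAt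
  have hu₁ : ∀ x ∈ s, HasDerivAt (deriv u) (γ * u x) x := fun x hx =>
    hasDerivAt_deriv_of_isOpen hs hu hx <|
      (((hf2 x hx).hasDerivAt.fun_mul (hv x hx).differentiableAt.hasDerivAt).fun_add
        ((hf1 x hx).hasDerivAt.fun_mul (hv₁ x hx))).congr_deriv (by
          have hε0 : ε ≠ 0 := left_ne_zero_of_mul (hε x hx).ne'
          have hf'0 : deriv f x ≠ 0 := right_ne_zero_of_mul (hε x hx).ne'
          rw [(hv x hx).deriv]
          field_simp
          ring)
  have hv0 : ∀ x ∈ s, v x ≠ 0 := fun x hx => inv_ne_zero (Real.sqrt_pos.2 (hε x hx)).ne'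
  exact ⟨u, v, fun x hx => (hu x hx).differentiableAt, hu₁,
    fun x hx => (hv x hx).differentiableAt, hv₁, hv0,
    fun x hx => (mul_div_cancel_right₀ (f x) (hv0 x hx)).symm⟩

theorem stmt2_general (I : Set ℝ) (hIopen : IsOpen I) (hIconn : I.OrdConnected)
    (γ : ℝ) (f : ℝ → ℝ)
    (hf1 : ∀ x ∈ I, DifferentiableAt ℝ f x)
    (hf2 : ∀ x ∈ I, DifferentiableAt ℝ (deriv f) x)
    (hf3 : ∀ x ∈ I, DifferentiableAt ℝ (deriv (deriv f)) x)
    (hf' : ∀ x ∈ I, deriv f x ≠ 0) :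
    (∃ u v : ℝ → ℝ,
      (∀ x ∈ I, DifferentiableAt ℝ u x) ∧ (∀ x ∈ I, DifferentiableAt ℝ (deriv u) x) ∧
      (∀ x ∈ I, DifferentiableAt ℝ v x) ∧ (∀ x ∈ I, DifferentiableAt ℝ (deriv v) x) ∧
      (∀ x ∈ I, v x ≠ 0) ∧
      (∀ x ∈ I, deriv (deriv u) x = γ * u x) ∧
      (∀ x ∈ I, deriv (deriv v) x = γ * v x) ∧
      (∀ x ∈ I, f x = u x / v x)) ↔
    (∀ x ∈ I, schwarzian f x = -2 * γ) := by
  constructor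
  · rintro ⟨u, v, hu1, hu2, hv1, hv2, hv0, hu'', hv'', hfuv⟩ x hx
    exact schwarzian_eq_of_eqOn_div hIopen (fun y hy => (hu1 y hy).hasDerivAt)
      (fun y hy => hu'' y hy ▸ (hu2 y hy).hasDerivAt) (fun y hy => (hv1 y hy).hasDerivAt)
      (fun y hy => hv'' y hy ▸ (hv2 y hy).hasDerivAt) hv0 hfuv hx (hf' x hx)
  · intro hS
    obtain ⟨ε, hε⟩ := exists_pos_mul_deriv_of_ne_zero hIconn hf1 hf'
    obtain ⟨u, v, hu1, hu2, hv1, hv2, hv0, hfuv⟩ :=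
      exists_eqOn_div_of_schwarzian_eq hIopen hf1 hf2 hf3 hε hS
    exact ⟨u, v, hu1, fun x hx => (hu2 x hx).differentiableAt, hv1,
      fun x hx => (hv2 x hx).differentiableAt, hv0, fun x hx => (hu2 x hx).deriv,
      fun x hx => (hv2 x hx).deriv, hfuv⟩

theorem stmt2 (I : Set ℝ) (hIopen : IsOpen I) (hIne : I.Nonempty) (hIconn : I.OrdConnected)
    (γ : ℝ) (f : ℝ → ℝ)
    (hf1 : ∀ x ∈ I, DifferentiableAt ℝ f x)
    (hf2 : ∀ x ∈ I, DifferentiableAt ℝ (deriv f) x)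
    (hf3 : ∀ x ∈ I, DifferentiableAt ℝ (deriv (deriv f)) x)
    (hf' : ∀ x ∈ I, deriv f x ≠ 0) :
    (∃ u v : ℝ → ℝ,
      (∀ x ∈ I, DifferentiableAt ℝ u x) ∧ (∀ x ∈ I, DifferentiableAt ℝ (deriv u) x) ∧
      (∀ x ∈ I, DifferentiableAt ℝ v x) ∧ (∀ x ∈ I, DifferentiableAt ℝ (deriv v) x) ∧
      (∀ x ∈ I, v x ≠ 0) ∧
      (∀ x ∈ I, deriv (deriv u) x = γ * u x) ∧
      (∀ x ∈ I, deriv (deriv v) x = γ * v x) ∧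
      (∀ x ∈ I, f x = u x / v x)) ↔
    (∀ x ∈ I, schwarzian f x = -2 * γ) :=
  stmt2_general I hIopen hIconn γ f hf1 hf2 hf3 hf'
end

section
/- Let I be a nonempty open real interval and let f : I → ℝ be a three times differentiable function whose first derivative does not vanish on I. Then S(f) = 0 holds on I if and only if there exist four constants a,b,c,d ∈ ℝ with ad ≠ bc and 0 ∉ cI+d (i.e., cx+d ≠ 0 for all x ∈ I) such that f(x) = (ax+b)/(cx+d) for all x ∈ I. -/
/-!
If `f'` has constant sign `s` on `I`, put `g = (s f')^(-1/2)`; a direct computation gives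
`g'' = -(1/2) S(f) g`. Hence `S(f) = 0` exactly when `g` is affine, i.e. `f' = s / (c x + d)^2`
with `c x + d > 0`, and the antiderivatives of this function are the Möbius maps with
denominator `c x + d` and determinant `s`. Conversely a Möbius map with determinant `e` has
`f' = e/(cx+d)^2`, `f'' = -2ce/(cx+d)^3`, `f''' = 6c^2e/(cx+d)^4`, so `f''' f' = (3/2) f''^2`.
-/

open Set

theorem schwarzian_eq_zero_iff {f : ℝ → ℝ} {x : ℝ} (hx : deriv f x ≠ 0) :
    schwarzian f x = 0 ↔
      2 * deriv (deriv (deriv f)) x * deriv f x = 3 * deriv (deriv f) x ^ 2 := by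
  rw [schwarzian, sub_eq_zero]
  field_simp

theorem Set.EqOn.schwarzian {f g : ℝ → ℝ} {s : Set ℝ} (hfg : s.EqOn f g) (hs : IsOpen s) :
    s.EqOn (schwarzian f) (schwarzian g) := by
  have h1 := hfg.deriv hs
  have h2 := h1.deriv hs
  have h3 := h2.deriv hs
  intro x hx
  simp only [_root_.schwarzian, h1 hx, h2 hx, h3 hx]

theorem hasDerivAt_div_linear_pow (k c d : ℝ) (n : ℕ) {x : ℝ} (hx : c * x + d ≠ 0) :
    HasDerivAt (fun y => k / (c * y + d) ^ n) (-(n * c * k) / (c * x + d) ^ (n + 1)) x := by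
  have hlin : HasDerivAt (fun y => c * y + d) c x := by
    simpa using ((hasDerivAt_id x).const_mul c).add_const d
  refine ((hasDerivAt_const x k).div (hlin.fun_pow n) (pow_ne_zero n hx)).congr_deriv ?_
  rcases n with _ | n
  · simp
  · rw [Nat.add_sub_cancel]
    field_simp
    ring

theorem hasDerivAt_mobius (a b c d : ℝ) {x : ℝ} (hx : c * x + d ≠ 0) :
    HasDerivAt (fun y => (a * y + b) / (c * y + d)) ((a * d - b * c) / (c * x + d) ^ 2) x := by
  have hlin : ∀ u v : ℝ, HasDerivAt (fun y => u * y + v) u x := fun u v => by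
    simpa using ((hasDerivAt_id x).const_mul u).add_const v
  exact ((hlin a b).div (hlin c d) hx).congr_deriv (by ring)

theorem schwarzian_mobius (a b c d : ℝ) {x : ℝ} (hx : c * x + d ≠ 0) :
    schwarzian (fun y => (a * y + b) / (c * y + d)) x = 0 := by
  set U := {y : ℝ | c * y + d ≠ 0}
  have hU : IsOpen U := isOpen_ne_fun (by fun_prop) (by fun_prop)
  have h1 : U.EqOn (deriv fun y => (a * y + b) / (c * y + d))
      (fun y => (a * d - b * c) / (c * y + d) ^ 2) := fun y hy =>
    (hasDerivAt_mobius a b c d hy).deriv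
  have h2 := (h1.deriv hU).trans fun y hy => (hasDerivAt_div_linear_pow _ c d 2 hy).deriv
  have h3 := (h2.deriv hU).trans fun y hy => (hasDerivAt_div_linear_pow _ c d 3 hy).deriv
  rw [schwarzian, h1 hx, h2 hx, h3 hx]
  push_cast
  field_simp
  ring

theorem IsPreconnected.exists_sign_mul_pos {I : Set ℝ} (hI : IsPreconnected I) {φ : ℝ → ℝ}
    (hφ : ContinuousOn φ I) (hne : ∀ x ∈ I, φ x ≠ 0) :
    ∃ s : ℝ, s ^ 2 = 1 ∧ ∀ x ∈ I, 0 < s * φ x := by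
  have no_sign_change : ∀ x ∈ I, ∀ y ∈ I, φ x < 0 → 0 < φ y → False := by
    intro x hx y hy hxneg hypos
    obtain ⟨z, hz, hz0⟩ := hI.intermediate_value hx hy hφ ⟨hxneg.le, hypos.le⟩
    exact hne z hz hz0
  by_cases hpos : ∀ x ∈ I, 0 < φ x
  · exact ⟨1, one_pow 2, fun x hx => by simpa using hpos x hx⟩
  · push Not at hpos
    obtain ⟨x₀, hx₀, hx₀nonpos⟩ := hpos
    refine ⟨-1, by norm_num, fun x hx => ?_⟩
    rcases (hne x hx).lt_or_gt with hneg | hxpos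
    · linarith
    · exact (no_sign_change x₀ hx₀ x hx (hx₀nonpos.lt_of_ne (hne x₀ hx₀)) hxpos).elim

theorem IsOpen.exists_eq_mul_add_of_hasDerivAt_zero {I : Set ℝ} (hIo : IsOpen I)
    (hIc : IsPreconnected I) {g g' : ℝ → ℝ} (hg : ∀ x ∈ I, HasDerivAt g (g' x) x)
    (hg' : ∀ x ∈ I, HasDerivAt g' 0 x) : ∃ c d : ℝ, ∀ x ∈ I, g x = c * x + d := by
  obtain ⟨c, hc⟩ := hIo.exists_is_const_of_deriv_eq_zero hIc
    (fun x hx => (hg' x hx).differentiableAt.differentiableWithinAt) fun x hx => (hg' x hx).deriv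
  have hlin : ∀ x ∈ I, HasDerivAt (fun y => g y - c * y) 0 x := fun x hx =>
    ((hg x hx).sub ((hasDerivAt_id x).const_mul c)).congr_deriv (by simp [hc x hx])
  obtain ⟨d, hd⟩ := hIo.exists_is_const_of_deriv_eq_zero hIc
    (fun x hx => (hlin x hx).differentiableAt.differentiableWithinAt) fun x hx => (hlin x hx).deriv
  exact ⟨c, d, fun x hx => by linarith [hd x hx]⟩

/-- `p' p^(-3/2)` is `-2` times the derivative of `p^(-1/2)`. -/
theorem hasDerivAt_deriv_rpow_neg_half {p p' : ℝ → ℝ} {p'' x : ℝ} (hpos : 0 < p x)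
    (hp : HasDerivAt p (p' x) x) (hp' : HasDerivAt p' p'' x)
    (hode : 2 * p'' * p x = 3 * p' x ^ 2) :
    HasDerivAt (fun y => p' y * p y ^ (-(3 / 2) : ℝ)) 0 x := by
  have hpow := hp.rpow_const (p := -(3 / 2)) (Or.inl hpos.ne')
  refine (hp'.mul hpow).congr_deriv ?_
  have hsplit : p x ^ (-(3 / 2) : ℝ) = p x ^ (-(3 / 2) - 1 : ℝ) * p x := by
    rw [← Real.rpow_add_one hpos.ne']; norm_num
  rw [hsplit]
  linear_combination (1 / 2 * p x ^ (-(3 / 2) - 1 : ℝ)) * hode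

theorem IsOpen.exists_eq_inv_sq_affine {I : Set ℝ} (hIo : IsOpen I)
    (hIc : IsPreconnected I) {p p' p'' : ℝ → ℝ} (hpos : ∀ x ∈ I, 0 < p x)
    (hp : ∀ x ∈ I, HasDerivAt p (p' x) x) (hp' : ∀ x ∈ I, HasDerivAt p' (p'' x) x)
    (hode : ∀ x ∈ I, 2 * p'' x * p x = 3 * p' x ^ 2) :
    ∃ c d : ℝ, ∀ x ∈ I, 0 < c * x + d ∧ p x = ((c * x + d) ^ 2)⁻¹ := by
  have hg : ∀ x ∈ I, HasDerivAt (fun y => p y ^ (-(1 / 2) : ℝ))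
      (-(1 / 2) * (p' x * p x ^ (-(3 / 2) : ℝ))) x := fun x hx =>
    ((hp x hx).rpow_const (Or.inl (hpos x hx).ne')).congr_deriv (by norm_num; ring)
  have hg' : ∀ x ∈ I, HasDerivAt (fun y => -(1 / 2) * (p' y * p y ^ (-(3 / 2) : ℝ))) 0 x :=
    fun x hx => by
      simpa using ((hasDerivAt_deriv_rpow_neg_half (hpos x hx) (hp x hx) (hp' x hx)
        (hode x hx)).const_mul (-(1 / 2) : ℝ))
  obtain ⟨c, d, hcd⟩ := hIo.exists_eq_mul_add_of_hasDerivAt_zero hIc hg hg'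
  refine ⟨c, d, fun x hx => ?_⟩
  rw [← hcd x hx, ← Real.rpow_mul_natCast (hpos x hx).le]
  refine ⟨Real.rpow_pos_of_pos (hpos x hx) _, ?_⟩
  norm_num [Real.rpow_neg_one]

theorem IsOpen.exists_mobius_of_deriv_eq {I : Set ℝ} (hIo : IsOpen I) (hIc : IsPreconnected I)
    {x₀ : ℝ} (hx₀ : x₀ ∈ I) {f : ℝ → ℝ} (hf : DifferentiableOn ℝ f I) {s c d : ℝ}
    (hcd : ∀ x ∈ I, c * x + d ≠ 0) (hf' : ∀ x ∈ I, deriv f x = s / (c * x + d) ^ 2) :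
    ∃ a b : ℝ, a * d - b * c = s ∧ ∀ x ∈ I, f x = (a * x + b) / (c * x + d) := by
  set k := c * x₀ + d
  have hk : k ≠ 0 := hcd x₀ hx₀
  set M : ℝ → ℝ := fun y => (s / k * y + -(s * x₀ / k)) / (c * y + d)
  have hdet : s / k * d - -(s * x₀ / k) * c = s := by field_simp; ring
  have hM : ∀ x ∈ I, HasDerivAt M (s / (c * x + d) ^ 2) x := fun x hx =>
    hdet ▸ hasDerivAt_mobius _ _ c d (hcd x hx)
  obtain ⟨e, he⟩ := hIo.exists_eq_add_of_deriv_eq hIc hf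
    (fun x hx => (hM x hx).differentiableAt.differentiableWithinAt)
    fun x hx => (hf' x hx).trans (hM x hx).deriv.symm
  refine ⟨s / k + e * c, -(s * x₀ / k) + e * d, by linear_combination hdet, fun x hx => ?_⟩
  rw [he hx]
  dsimp only [M]
  rw [div_add' _ _ _ (hcd x hx)]
  ring

theorem exists_mobius_of_schwarzian_eq_zero {I : Set ℝ} (hIo : IsOpen I) (hIne : I.Nonempty)
    (hIc : IsPreconnected I) {f : ℝ → ℝ}
    (hf1 : ∀ x ∈ I, DifferentiableAt ℝ f x)
    (hf2 : ∀ x ∈ I, DifferentiableAt ℝ (deriv f) x)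
    (hf3 : ∀ x ∈ I, DifferentiableAt ℝ (deriv (deriv f)) x)
    (hf' : ∀ x ∈ I, deriv f x ≠ 0) (hS : ∀ x ∈ I, schwarzian f x = 0) :
    ∃ a b c d : ℝ, a * d ≠ b * c ∧ (∀ x ∈ I, c * x + d ≠ 0) ∧
      ∀ x ∈ I, f x = (a * x + b) / (c * x + d) := by
  obtain ⟨x₀, hx₀⟩ := hIne
  obtain ⟨s, hs, hpos⟩ := hIc.exists_sign_mul_pos
    (fun x hx => (hf2 x hx).continuousAt.continuousWithinAt) hf'
  obtain ⟨c, d, hcd⟩ := hIo.exists_eq_inv_sq_affine hIc hpos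
    (fun x hx => (hf2 x hx).hasDerivAt.const_mul s)
    (fun x hx => (hf3 x hx).hasDerivAt.const_mul s)
    fun x hx => by
      linear_combination s ^ 2 * (schwarzian_eq_zero_iff (hf' x hx)).1 (hS x hx)
  have hden : ∀ x ∈ I, c * x + d ≠ 0 := fun x hx => (hcd x hx).1.ne'
  obtain ⟨a, b, hab, hfab⟩ := hIo.exists_mobius_of_deriv_eq hIc hx₀
    (fun x hx => (hf1 x hx).differentiableWithinAt) hden fun x hx => by
      rw [div_eq_mul_inv, ← (hcd x hx).2]
      linear_combination -(deriv f x) * hs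
  have hs0 : s ≠ 0 := by rintro rfl; norm_num at hs
  exact ⟨a, b, c, d, fun h => hs0 (by linear_combination hab.symm + h), hden, hfab⟩

theorem stmt3 (I : Set ℝ) (hIopen : IsOpen I) (hIne : I.Nonempty) (hIconn : I.OrdConnected)
    (f : ℝ → ℝ)
    (hf1 : ∀ x ∈ I, DifferentiableAt ℝ f x)
    (hf2 : ∀ x ∈ I, DifferentiableAt ℝ (deriv f) x)
    (hf3 : ∀ x ∈ I, DifferentiableAt ℝ (deriv (deriv f)) x)
    (hf' : ∀ x ∈ I, deriv f x ≠ 0) :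
    (∀ x ∈ I, schwarzian f x = 0) ↔
    (∃ a b c d : ℝ, a * d ≠ b * c ∧ (∀ x ∈ I, c * x + d ≠ 0) ∧
      ∀ x ∈ I, f x = (a * x + b) / (c * x + d)) := by
  refine ⟨exists_mobius_of_schwarzian_eq_zero hIopen hIne hIconn.isPreconnected hf1 hf2 hf3 hf',
    ?_⟩
  rintro ⟨a, b, c, d, -, hden, hfab⟩ x hx
  rw [Set.EqOn.schwarzian (fun y hy => hfab y hy) hIopen hx]
  exact schwarzian_mobius a b c d (hden x hx)
end

section
/- Let I be a nonempty open real interval, γ ∈ ℝ, and let u,v,w,z : I → ℝ be solutions of the second-order linear differential equation F'' = γF such that v > 0 and z > 0 on I and the pairs {u,v} and {w,z} are each linearly independent. Assume that the functions f,g : I → ℝ, p = (p₁,p₂) : I → ℝ₊², and q = (q₁,q₂) : I → ℝ₊² satisfy f = u/v, g = w/z, and p₁q₁ = p₂q₂ = vz on I. Then f and g are strictly monotone and continuous, and the invariance equation A_{f,p}(x,y) + A_{g,q}(x,y) = x + y holds for all x,y ∈ I. -/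
/-!
Every solution of `F'' = γ F` is a combination of the generalized cosine and sine `C`, `S`
(the solutions with `C 0 = 1`, `C' 0 = 0` and `S 0 = 0`, `S' 0 = 1`). Hence for two solutions
`u`, `v` the bracket `u a * v b - u b * v a` equals `W(a) * S (b - a)`, where the Wronskian `W`
never vanishes by linear independence. So `f = u / v` has the nonvanishing derivative `-W / v²`
and is strictly monotone, and `f t` is the `p`-weighted mean of `f x`, `f y` iff
`(p₁ x / v x) S (x - t) + (p₂ y / v y) S (y - t) = 0`. As `S` is odd, replacing `t` by
`x + y - t` and the weights by their inverses `q₁ x / z x`, `q₂ y / z y` preserves this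
relation, which says that `A_{g,q}(x, y) = x + y - A_{f,p}(x, y)`.
-/

open Set

noncomputable def genCos (γ t : ℝ) : ℝ :=
  if 0 ≤ γ then Real.cosh (√γ * t) else Real.cos (√(-γ) * t)

noncomputable def genSin (γ t : ℝ) : ℝ :=
  if γ = 0 then t
  else if 0 < γ then Real.sinh (√γ * t) / √γ
  else Real.sin (√(-γ) * t) / √(-γ)

@[simp]
lemma genCos_zero (γ : ℝ) : genCos γ 0 = 1 := by
  unfold genCos; split_ifs <;> simp

@[simp]
lemma genSin_zero (γ : ℝ) : genSin γ 0 = 0 := by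
  unfold genSin; split_ifs <;> simp

lemma genSin_neg (γ t : ℝ) : genSin γ (-t) = -genSin γ t := by
  unfold genSin; split_ifs <;> simp [neg_div]

lemma hasDerivAt_genSin (γ t : ℝ) : HasDerivAt (genSin γ) (genCos γ t) t := by
  unfold genSin genCos
  rcases lt_trichotomy γ 0 with hγ | rfl | hγ
  · have hk : √(-γ) ≠ 0 := (Real.sqrt_pos.2 (neg_pos.2 hγ)).ne'
    simp only [hγ.ne, hγ.not_gt, hγ.not_ge, if_false]
    simpa [hk] using (((hasDerivAt_id' t).const_mul √(-γ)).sin).div_const √(-γ)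
  · simpa using hasDerivAt_id' t
  · have hk : √γ ≠ 0 := (Real.sqrt_pos.2 hγ).ne'
    simp only [hγ.ne', hγ, hγ.le, if_true, if_false]
    simpa [hk] using (((hasDerivAt_id' t).const_mul √γ).sinh).div_const √γ

lemma hasDerivAt_genCos (γ t : ℝ) : HasDerivAt (genCos γ) (γ * genSin γ t) t := by
  unfold genSin genCos
  rcases lt_trichotomy γ 0 with hγ | rfl | hγ
  · have hk : √(-γ) ≠ 0 := (Real.sqrt_pos.2 (neg_pos.2 hγ)).ne'
    have hsq : √(-γ) ^ 2 = -γ := Real.sq_sqrt (neg_nonneg.2 hγ.le)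
    simp only [hγ.ne, hγ.not_gt, hγ.not_ge, if_false]
    convert ((hasDerivAt_id' t).const_mul √(-γ)).cos using 1
    field_simp
    simp [hsq]
  · simpa using hasDerivAt_const t (1 : ℝ)
  · have hk : √γ ≠ 0 := (Real.sqrt_pos.2 hγ).ne'
    have hsq : √γ ^ 2 = γ := Real.sq_sqrt hγ.le
    simp only [hγ.ne', hγ, hγ.le, if_true, if_false]
    convert ((hasDerivAt_id' t).const_mul √γ).cosh using 1
    field_simp
    simp [hsq]

lemma genCos_sq_sub_mul_genSin_sq (γ t : ℝ) : genCos γ t ^ 2 - γ * genSin γ t ^ 2 = 1 := by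
  have hderiv (s : ℝ) : HasDerivAt (fun s => genCos γ s ^ 2 - γ * genSin γ s ^ 2) 0 s := by
    refine (((hasDerivAt_genCos γ s).fun_pow 2).fun_sub
      (((hasDerivAt_genSin γ s).fun_pow 2).const_mul γ)).congr_deriv ?_
    ring
  simpa using is_const_of_deriv_eq_zero (fun s => (hderiv s).differentiableAt)
    (fun s => (hderiv s).deriv) t 0

lemma genSin_reflect_inv_weights {γ a b x y t : ℝ} (ha : a ≠ 0) (hb : b ≠ 0)
    (h : a * genSin γ (x - t) + b * genSin γ (y - t) = 0) :
    a⁻¹ * genSin γ (x - (x + y - t)) + b⁻¹ * genSin γ (y - (x + y - t)) = 0 := by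
  rw [show x - (x + y - t) = -(y - t) by ring, show y - (x + y - t) = -(x - t) by ring,
    genSin_neg, genSin_neg]
  field_simp
  linear_combination -h

lemma strictMonoOn_or_strictAntiOn_of_hasDerivWithinAt_ne_zero {s : Set ℝ} (hs : Convex ℝ s)
    {f f' : ℝ → ℝ} (hf : ∀ x ∈ s, HasDerivWithinAt f (f' x) s x)
    (hf' : ∀ x ∈ s, f' x ≠ 0) :
    StrictMonoOn f s ∨ StrictAntiOn f s := by
  have hcont : ContinuousOn f s := fun x hx => (hf x hx).continuousWithinAt
  have hint : ∀ x ∈ interior s, HasDerivWithinAt f (f' x) (interior s) x := fun x hx =>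
    (hf x (interior_subset hx)).mono interior_subset
  rcases hasDerivWithinAt_forall_lt_or_forall_gt_of_forall_ne hs hf hf' with hneg | hpos
  · exact Or.inr <| strictAntiOn_of_hasDerivWithinAt_neg hs hcont hint
      fun x hx => hneg x (interior_subset hx)
  · exact Or.inl <| strictMonoOn_of_hasDerivWithinAt_pos hs hcont hint
      fun x hx => hpos x (interior_subset hx)

lemma weighted_mean_mem_uIcc {a b : ℝ} (ha : 0 < a) (hb : 0 < b) (r s : ℝ) :
    (a * r + b * s) / (a + b) ∈ uIcc r s := by
  rw [← segment_eq_uIcc, mem_segment_iff_div]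
  exact ⟨a, b, ha.le, hb.le, by positivity, by simp only [smul_eq_mul]; ring⟩

lemma add_sub_mem_uIcc {x y t : ℝ} (ht : t ∈ uIcc x y) : x + y - t ∈ uIcc x y := by
  have := mem_image_of_mem (fun s => x + y - s) ht
  rwa [image_const_sub_uIcc, add_sub_cancel_right, add_sub_cancel_left, uIcc_comm] at this

lemma bajMean_eq_of_injOn {I : Set ℝ} {f p₁ p₂ : ℝ → ℝ} (hf : InjOn f I) {x y t : ℝ}
    (ht : t ∈ I) (hft : f t = (p₁ x * f x + p₂ y * f y) / (p₁ x + p₂ y)) :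
    bajMean I f p₁ p₂ x y = t :=
  hf (Function.invFunOn_mem ⟨t, ht, hft⟩) ht
    ((Function.invFunOn_eq ⟨t, ht, hft⟩).trans hft.symm)

lemma bajMean_mem_uIcc_and_apply {I : Set ℝ} (hI : I.OrdConnected) {f p₁ p₂ : ℝ → ℝ}
    (hinj : InjOn f I) (hf : ContinuousOn f I) {x y : ℝ} (hx : x ∈ I) (hy : y ∈ I)
    (hp₁ : 0 < p₁ x) (hp₂ : 0 < p₂ y) :
    bajMean I f p₁ p₂ x y ∈ uIcc x y ∧
      f (bajMean I f p₁ p₂ x y) = (p₁ x * f x + p₂ y * f y) / (p₁ x + p₂ y) := by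
  obtain ⟨t, htxy, hft⟩ := intermediate_value_uIcc (hf.mono (hI.uIcc_subset hx hy))
    (weighted_mean_mem_uIcc hp₁ hp₂ (f x) (f y))
  rw [bajMean_eq_of_injOn hinj (hI.uIcc_subset hx hy htxy) hft]
  exact ⟨htxy, hft⟩

def IsODESolutionOn (γ : ℝ) (I : Set ℝ) (F F' : ℝ → ℝ) : Prop :=
  ∀ x ∈ I, HasDerivWithinAt F (F' x) I x ∧ HasDerivWithinAt F' (γ * F x) I x

namespace IsODESolutionOn

variable {γ : ℝ} {I : Set ℝ} {F F' G G' u u' v v' f : ℝ → ℝ}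

lemma of_deriv (hF : ∀ x ∈ I, DifferentiableAt ℝ F x)
    (hF' : ∀ x ∈ I, DifferentiableAt ℝ (deriv F) x)
    (hF'' : ∀ x ∈ I, deriv (deriv F) x = γ * F x) :
    IsODESolutionOn γ I F (deriv F) := fun x hx =>
  ⟨(hF x hx).hasDerivAt.hasDerivWithinAt, hF'' x hx ▸ (hF' x hx).hasDerivAt.hasDerivWithinAt⟩

lemma genCos_sub (γ : ℝ) (I : Set ℝ) (x₀ : ℝ) :
    IsODESolutionOn γ I (fun x => genCos γ (x - x₀)) (fun x => γ * genSin γ (x - x₀)) :=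
  fun x _ => ⟨((hasDerivAt_genCos γ _).comp_sub_const x x₀).hasDerivWithinAt,
    (((hasDerivAt_genSin γ _).comp_sub_const x x₀).const_mul γ).hasDerivWithinAt⟩

lemma genSin_sub (γ : ℝ) (I : Set ℝ) (x₀ : ℝ) :
    IsODESolutionOn γ I (fun x => genSin γ (x - x₀)) (fun x => genCos γ (x - x₀)) :=
  fun x _ => ⟨((hasDerivAt_genSin γ _).comp_sub_const x x₀).hasDerivWithinAt,
    ((hasDerivAt_genCos γ _).comp_sub_const x x₀).hasDerivWithinAt⟩

lemma linearCombination (hF : IsODESolutionOn γ I F F') (hG : IsODESolutionOn γ I G G')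
    (a b : ℝ) :
    IsODESolutionOn γ I (fun x => a * F x + b * G x) (fun x => a * F' x + b * G' x) :=
  fun x hx =>
    ⟨((hF x hx).1.const_mul a).add ((hG x hx).1.const_mul b),
      (((hF x hx).2.const_mul a).add ((hG x hx).2.const_mul b)).congr_deriv (by ring)⟩

lemma wronskian_eq (hI : Convex ℝ I) (hF : IsODESolutionOn γ I F F')
    (hG : IsODESolutionOn γ I G G') {a b : ℝ} (ha : a ∈ I) (hb : b ∈ I) :
    F a * G' a - F' a * G a = F b * G' b - F' b * G b := by
  have hW : ∀ x ∈ I, HasDerivWithinAt (fun x => F x * G' x - F' x * G x) 0 I x := fun x hx =>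
    (((hF x hx).1.mul (hG x hx).2).sub ((hF x hx).2.mul (hG x hx).1)).congr_deriv (by ring)
  have := hI.norm_image_sub_le_of_norm_hasDerivWithin_le hW (fun _ _ => norm_zero.le) ha hb
  rw [zero_mul, norm_le_zero_iff, sub_eq_zero] at this
  exact this.symm

lemma eq_genCos_add_genSin (hI : Convex ℝ I) (hF : IsODESolutionOn γ I F F') {x₀ x : ℝ}
    (hx₀ : x₀ ∈ I) (hx : x ∈ I) :
    F x = F x₀ * genCos γ (x - x₀) + F' x₀ * genSin γ (x - x₀) := by
  have hC := hF.wronskian_eq hI (genCos_sub γ I x₀) hx hx₀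
  have hS := hF.wronskian_eq hI (genSin_sub γ I x₀) hx hx₀
  simp only [sub_self, genCos_zero, genSin_zero, mul_zero, mul_one, sub_zero, zero_sub]
    at hC hS
  linear_combination genCos γ (x - x₀) * hS - genSin γ (x - x₀) * hC
    - F x * genCos_sq_sub_mul_genSin_sq γ (x - x₀)

lemma bracket_eq (hI : Convex ℝ I) (hF : IsODESolutionOn γ I F F')
    (hG : IsODESolutionOn γ I G G') {a b : ℝ} (ha : a ∈ I) (hb : b ∈ I) :
    F a * G b - F b * G a = (F a * G' a - F' a * G a) * genSin γ (b - a) := by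
  linear_combination (hG.linearCombination hF (F a) (-G a)).eq_genCos_add_genSin hI ha hb

lemma wronskian_ne_zero (hI : Convex ℝ I) (hF : IsODESolutionOn γ I F F')
    (hG : IsODESolutionOn γ I G G')
    (hind : ∀ a b : ℝ, (∀ x ∈ I, a * F x + b * G x = 0) → a = 0 ∧ b = 0)
    {a : ℝ} (ha : a ∈ I) (hGa : G a ≠ 0) : F a * G' a - F' a * G a ≠ 0 := by
  intro hW
  refine hGa (neg_eq_zero.1 (hind (-G a) (F a) fun x hx => ?_).1)
  linear_combination hF.bracket_eq hI hG ha hx + genSin γ (x - a) * hW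

lemma strictMonoOn_or_strictAntiOn_div (hI : Convex ℝ I) (hu : IsODESolutionOn γ I u u')
    (hv : IsODESolutionOn γ I v v') (hv0 : ∀ x ∈ I, v x ≠ 0)
    (hind : ∀ a b : ℝ, (∀ x ∈ I, a * u x + b * v x = 0) → a = 0 ∧ b = 0)
    (hf : ∀ x ∈ I, f x = u x / v x) :
    (StrictMonoOn f I ∨ StrictAntiOn f I) ∧ ContinuousOn f I := by
  have hderiv : ∀ x ∈ I, HasDerivWithinAt f ((u' x * v x - u x * v' x) / v x ^ 2) I x :=
    fun x hx => ((hu x hx).1.div (hv x hx).1 (hv0 x hx)).congr hf (hf x hx)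
  refine ⟨strictMonoOn_or_strictAntiOn_of_hasDerivWithinAt_ne_zero hI hderiv fun x hx => ?_,
    fun x hx => (hderiv x hx).continuousWithinAt⟩
  have hW := hu.wronskian_ne_zero hI hv hind hx (hv0 x hx)
  exact div_ne_zero (by contrapose! hW; linear_combination -hW) (pow_ne_zero 2 (hv0 x hx))

lemma eq_weighted_mean_iff (hI : Convex ℝ I) (hu : IsODESolutionOn γ I u u')
    (hv : IsODESolutionOn γ I v v') (hv0 : ∀ x ∈ I, v x ≠ 0)
    (hind : ∀ a b : ℝ, (∀ x ∈ I, a * u x + b * v x = 0) → a = 0 ∧ b = 0)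
    (hf : ∀ x ∈ I, f x = u x / v x) {t x y a b : ℝ} (ht : t ∈ I) (hx : x ∈ I)
    (hy : y ∈ I) (hab : a + b ≠ 0) :
    f t = (a * f x + b * f y) / (a + b) ↔
      a / v x * genSin γ (x - t) + b / v y * genSin γ (y - t) = 0 := by
  have hbx := hu.bracket_eq hI hv ht hx
  have hby := hu.bracket_eq hI hv ht hy
  have hvt := hv0 t ht
  have hvx := hv0 x hx
  have hvy := hv0 y hy
  have key : u t / v t * (a + b) - (a * (u x / v x) + b * (u y / v y)) =
      (u t * v' t - u' t * v t) * (a / v x * genSin γ (x - t) + b / v y * genSin γ (y - t)) /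
        v t := by
    field_simp
    linear_combination (a * v y) * hbx + (b * v x) * hby
  rw [hf t ht, hf x hx, hf y hy, eq_div_iff hab, ← sub_eq_zero, key, div_eq_zero_iff,
    mul_eq_zero, or_iff_left hvt, or_iff_right (hu.wronskian_ne_zero hI hv hind ht hvt)]

end IsODESolutionOn

theorem stmt4_general (I : Set ℝ) (hIconn : I.OrdConnected)
    (γ : ℝ) (u v w z : ℝ → ℝ)
    (hu1 : ∀ x ∈ I, DifferentiableAt ℝ u x) (hu2 : ∀ x ∈ I, DifferentiableAt ℝ (deriv u) x)
    (huODE : ∀ x ∈ I, deriv (deriv u) x = γ * u x)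
    (hv1 : ∀ x ∈ I, DifferentiableAt ℝ v x) (hv2 : ∀ x ∈ I, DifferentiableAt ℝ (deriv v) x)
    (hvODE : ∀ x ∈ I, deriv (deriv v) x = γ * v x)
    (hw1 : ∀ x ∈ I, DifferentiableAt ℝ w x) (hw2 : ∀ x ∈ I, DifferentiableAt ℝ (deriv w) x)
    (hwODE : ∀ x ∈ I, deriv (deriv w) x = γ * w x)
    (hz1 : ∀ x ∈ I, DifferentiableAt ℝ z x) (hz2 : ∀ x ∈ I, DifferentiableAt ℝ (deriv z) x)
    (hzODE : ∀ x ∈ I, deriv (deriv z) x = γ * z x)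
    (hvpos : ∀ x ∈ I, 0 < v x) (hzpos : ∀ x ∈ I, 0 < z x)
    (huvind : ∀ a b : ℝ, (∀ x ∈ I, a * u x + b * v x = 0) → a = 0 ∧ b = 0)
    (hwzind : ∀ a b : ℝ, (∀ x ∈ I, a * w x + b * z x = 0) → a = 0 ∧ b = 0)
    (f g p₁ p₂ q₁ q₂ : ℝ → ℝ)
    (hp : ∀ x ∈ I, 0 < p₁ x ∧ 0 < p₂ x) (hq : ∀ x ∈ I, 0 < q₁ x ∧ 0 < q₂ x)
    (hf : ∀ x ∈ I, f x = u x / v x) (hg : ∀ x ∈ I, g x = w x / z x)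
    (hpq : ∀ x ∈ I, p₁ x * q₁ x = v x * z x ∧ p₂ x * q₂ x = v x * z x) :
    (StrictMonoOn f I ∨ StrictAntiOn f I) ∧ ContinuousOn f I ∧
    (StrictMonoOn g I ∨ StrictAntiOn g I) ∧ ContinuousOn g I ∧
    (∀ x ∈ I, ∀ y ∈ I,
      bajMean I f p₁ p₂ x y + bajMean I g q₁ q₂ x y = x + y) := by
  have hI : Convex ℝ I := hIconn.convex
  have hu := IsODESolutionOn.of_deriv hu1 hu2 huODE
  have hv := IsODESolutionOn.of_deriv hv1 hv2 hvODE
  have hw := IsODESolutionOn.of_deriv hw1 hw2 hwODE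
  have hz := IsODESolutionOn.of_deriv hz1 hz2 hzODE
  have hv0 : ∀ x ∈ I, v x ≠ 0 := fun x hx => (hvpos x hx).ne'
  have hz0 : ∀ x ∈ I, z x ≠ 0 := fun x hx => (hzpos x hx).ne'
  obtain ⟨hfmono, hfcont⟩ := hu.strictMonoOn_or_strictAntiOn_div hI hv hv0 huvind hf
  obtain ⟨hgmono, hgcont⟩ := hw.strictMonoOn_or_strictAntiOn_div hI hz hz0 hwzind hg
  refine ⟨hfmono, hfcont, hgmono, hgcont, fun x hx y hy => ?_⟩
  obtain ⟨htxy, hft⟩ := bajMean_mem_uIcc_and_apply hIconn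
    (hfmono.elim StrictMonoOn.injOn StrictAntiOn.injOn) hfcont hx hy (hp x hx).1 (hp y hy).2
  set t := bajMean I f p₁ p₂ x y
  have ht : t ∈ I := hIconn.uIcc_subset hx hy htxy
  have hs : x + y - t ∈ I := hIconn.uIcc_subset hx hy (add_sub_mem_uIcc htxy)
  have hfrel := (hu.eq_weighted_mean_iff hI hv hv0 huvind hf ht hx hy
    (add_pos (hp x hx).1 (hp y hy).2).ne').1 hft
  have hqx : (p₁ x / v x)⁻¹ = q₁ x / z x := by
    rw [inv_div, div_eq_div_iff (hp x hx).1.ne' (hz0 x hx)]; linarith [(hpq x hx).1]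
  have hqy : (p₂ y / v y)⁻¹ = q₂ y / z y := by
    rw [inv_div, div_eq_div_iff (hp y hy).2.ne' (hz0 y hy)]; linarith [(hpq y hy).2]
  have hgrel := genSin_reflect_inv_weights (div_pos (hp x hx).1 (hvpos x hx)).ne'
    (div_pos (hp y hy).2 (hvpos y hy)).ne' hfrel
  rw [hqx, hqy] at hgrel
  rw [bajMean_eq_of_injOn (hgmono.elim StrictMonoOn.injOn StrictAntiOn.injOn) hs
    ((hw.eq_weighted_mean_iff hI hz hz0 hwzind hg hs hx hy
      (add_pos (hq x hx).1 (hq y hy).2).ne').2 hgrel)]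
  ring

theorem stmt4 (I : Set ℝ) (hIopen : IsOpen I) (hIne : I.Nonempty) (hIconn : I.OrdConnected)
    (γ : ℝ) (u v w z : ℝ → ℝ)
    (hu1 : ∀ x ∈ I, DifferentiableAt ℝ u x) (hu2 : ∀ x ∈ I, DifferentiableAt ℝ (deriv u) x)
    (huODE : ∀ x ∈ I, deriv (deriv u) x = γ * u x)
    (hv1 : ∀ x ∈ I, DifferentiableAt ℝ v x) (hv2 : ∀ x ∈ I, DifferentiableAt ℝ (deriv v) x)
    (hvODE : ∀ x ∈ I, deriv (deriv v) x = γ * v x)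
    (hw1 : ∀ x ∈ I, DifferentiableAt ℝ w x) (hw2 : ∀ x ∈ I, DifferentiableAt ℝ (deriv w) x)
    (hwODE : ∀ x ∈ I, deriv (deriv w) x = γ * w x)
    (hz1 : ∀ x ∈ I, DifferentiableAt ℝ z x) (hz2 : ∀ x ∈ I, DifferentiableAt ℝ (deriv z) x)
    (hzODE : ∀ x ∈ I, deriv (deriv z) x = γ * z x)
    (hvpos : ∀ x ∈ I, 0 < v x) (hzpos : ∀ x ∈ I, 0 < z x)
    (huvind : ∀ a b : ℝ, (∀ x ∈ I, a * u x + b * v x = 0) → a = 0 ∧ b = 0)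
    (hwzind : ∀ a b : ℝ, (∀ x ∈ I, a * w x + b * z x = 0) → a = 0 ∧ b = 0)
    (f g p₁ p₂ q₁ q₂ : ℝ → ℝ)
    (hp : ∀ x ∈ I, 0 < p₁ x ∧ 0 < p₂ x) (hq : ∀ x ∈ I, 0 < q₁ x ∧ 0 < q₂ x)
    (hf : ∀ x ∈ I, f x = u x / v x) (hg : ∀ x ∈ I, g x = w x / z x)
    (hpq : ∀ x ∈ I, p₁ x * q₁ x = v x * z x ∧ p₂ x * q₂ x = v x * z x) :
    (StrictMonoOn f I ∨ StrictAntiOn f I) ∧ ContinuousOn f I ∧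
    (StrictMonoOn g I ∨ StrictAntiOn g I) ∧ ContinuousOn g I ∧
    (∀ x ∈ I, ∀ y ∈ I,
      bajMean I f p₁ p₂ x y + bajMean I g q₁ q₂ x y = x + y) :=
  stmt4_general I hIconn γ u v w z hu1 hu2 huODE hv1 hv2 hvODE hw1 hw2 hwODE hz1 hz2 hzODE hvpos
    hzpos huvind hwzind f g p₁ p₂ q₁ q₂ hp hq hf hg hpq
end

section
/- Let I be a nonempty open real interval, let f : I → ℝ be a differentiable function on I with nonvanishing first derivative, let i ∈ {1,2}, and let p = (p₁,p₂) : I → ℝ₊² be such that p_i is continuous on I. Then the first-order partial derivative ∂_i A_{f,p} exists at every diagonal point (x,x) with x ∈ I, and ∂_i A_{f,p}(x,x) = p_i(x)/p₀(x), where p₀ := p₁ + p₂. -/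
open Set

private lemma injOn_of_deriv_ne_zero' {I : Set ℝ} (hIconn : I.OrdConnected) {f : ℝ → ℝ}
    (hf1 : ∀ x ∈ I, DifferentiableAt ℝ f x) (hf' : ∀ x ∈ I, deriv f x ≠ 0) :
    InjOn f I := by
  have key : ∀ u ∈ I, ∀ v ∈ I, u < v → f u ≠ f v := by
    intro u hu v hv huv heq
    have hsub : Icc u v ⊆ I := hIconn.out hu hv
    have hc : ContinuousOn f (Icc u v) := fun t ht =>
      ((hf1 t (hsub ht)).continuousAt).continuousWithinAt
    obtain ⟨c, hc1, hc2⟩ := exists_deriv_eq_zero huv hc heq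
    exact hf' c (hsub ⟨hc1.1.le, hc1.2.le⟩) hc2
  intro u hu v hv huv
  by_contra hne
  rcases lt_or_gt_of_ne hne with h | h
  · exact key u hu v hv h huv
  · exact key v hv u hu h huv.symm

private lemma invFunOn_local' {I : Set ℝ} {f : ℝ → ℝ} (hinj : InjOn f I) {a b x : ℝ}
    (hsub : Icc a b ⊆ I) (hax : a < x) (hxb : x < b)
    (hfc : ContinuousOn f (Icc a b)) :
    ∃ u v : ℝ, u < f x ∧ f x < v ∧
      ∀ y ∈ Ioo u v, Function.invFunOn f I y ∈ Ioo a b ∧ f (Function.invFunOn f I y) = y := by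
  have hab : a ≤ b := (hax.trans hxb).le
  have hxmem : x ∈ Icc a b := ⟨hax.le, hxb.le⟩
  have hkey : ∀ y, (y ∈ Ioo (f a) (f b) ∨ y ∈ Ioo (f b) (f a)) →
      Function.invFunOn f I y ∈ Ioo a b ∧ f (Function.invFunOn f I y) = y := by
    intro y hy
    have himg : y ∈ f '' Ioo a b := by
      rcases hy with hy | hy
      · exact intermediate_value_Ioo hab hfc hy
      · exact intermediate_value_Ioo' hab hfc hy
    obtain ⟨z, hz, hfz⟩ := himg
    have hzI : z ∈ I := hsub (Ioo_subset_Icc_self hz)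
    have h1 : f (Function.invFunOn f I y) = y := Function.invFunOn_eq ⟨z, hzI, hfz⟩
    have h2 : Function.invFunOn f I y ∈ I := Function.invFunOn_mem ⟨z, hzI, hfz⟩
    have h3 : Function.invFunOn f I y = z := hinj h2 hzI (h1.trans hfz.symm)
    exact ⟨h3 ▸ hz, h1⟩
  obtain hm | ha := hfc.strictMonoOn_of_injOn_Icc' hab (hinj.mono hsub)
  · exact ⟨f a, f b, hm (left_mem_Icc.2 hab) hxmem hax, hm hxmem (right_mem_Icc.2 hab) hxb,
      fun y hy => hkey y (Or.inl hy)⟩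
  · exact ⟨f b, f a, ha hxmem (right_mem_Icc.2 hab) hxb, ha (left_mem_Icc.2 hab) hxmem hax,
      fun y hy => hkey y (Or.inr hy)⟩

private lemma hasDerivAt_invFunOn' {I : Set ℝ} (hIopen : IsOpen I) (hIconn : I.OrdConnected)
    {f : ℝ → ℝ} (hf1 : ∀ x ∈ I, DifferentiableAt ℝ f x) (hf' : ∀ x ∈ I, deriv f x ≠ 0)
    {x : ℝ} (hx : x ∈ I) :
    HasDerivAt (Function.invFunOn f I) (deriv f x)⁻¹ (f x) := by
  have hinj := injOn_of_deriv_ne_zero' hIconn hf1 hf'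
  have hgx : Function.invFunOn f I (f x) = x := hinj.leftInvOn_invFunOn hx
  obtain ⟨ε, hε, hball⟩ := Metric.isOpen_iff.1 hIopen x hx
  have hfc : ContinuousOn f I := fun t ht => (hf1 t ht).continuousAt.continuousWithinAt
  have hIcc : ∀ r : ℝ, 0 < r → r < ε → Icc (x - r) (x + r) ⊆ I := by
    intro r _ hrε t ht
    apply hball
    rw [Metric.mem_ball, Real.dist_eq, abs_sub_lt_iff]
    constructor <;> [linarith [ht.2]; linarith [ht.1]]
  have hcont : ContinuousAt (Function.invFunOn f I) (f x) := by
    rw [Metric.continuousAt_iff]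
    intro δ hδ
    set r := min (δ / 2) (ε / 2) with hrdef
    have hr0 : 0 < r := lt_min (by linarith) (by linarith)
    have hrε : r < ε := (min_le_right _ _).trans_lt (by linarith)
    have hsub := hIcc r hr0 hrε
    obtain ⟨u, v, hu, hv, hloc⟩ := invFunOn_local' (x := x) hinj hsub
      (by linarith) (by linarith) (hfc.mono hsub)
    refine ⟨min (f x - u) (v - f x), lt_min (by linarith) (by linarith), fun {y} hy => ?_⟩
    rw [Real.dist_eq] at hy
    have hmin1 : min (f x - u) (v - f x) ≤ f x - u := min_le_left _ _
    have hmin2 : min (f x - u) (v - f x) ≤ v - f x := min_le_right _ _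
    rw [abs_sub_lt_iff] at hy
    have hyuv : y ∈ Ioo u v := ⟨by linarith [hy.2], by linarith [hy.1]⟩
    obtain ⟨hmem, -⟩ := hloc y hyuv
    rw [hgx, Real.dist_eq, abs_sub_lt_iff]
    have h1 := hmem.1
    have h2 := hmem.2
    have : r ≤ δ / 2 := min_le_left _ _
    constructor <;> linarith
  have hev : ∀ᶠ y in nhds (f x), f (Function.invFunOn f I y) = y := by
    have hsub := hIcc (ε / 2) (by linarith) (by linarith)
    obtain ⟨u, v, hu, hv, hloc⟩ := invFunOn_local' (x := x) hinj hsub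
      (by linarith) (by linarith) (hfc.mono hsub)
    exact Filter.eventually_of_mem (Ioo_mem_nhds hu hv) fun y hy => (hloc y hy).2
  have hfd : HasDerivAt f (deriv f x) (Function.invFunOn f I (f x)) := by
    rw [hgx]; exact (hf1 x hx).hasDerivAt
  exact HasDerivAt.of_local_left_inverse hcont hfd (hf' x hx) hev

private lemma hasDerivAt_weighted' {f q : ℝ → ℝ} {x d : ℝ} (hf : HasDerivAt f d x)
    (hq : ContinuousAt q x) (hqx : 0 < q x) {c : ℝ} (hc : 0 < c) :
    HasDerivAt (fun t => (q t * f t + c * f x) / (q t + c)) (q x / (q x + c) * d) x := by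
  have hne : q x + c ≠ 0 := by positivity
  rw [hasDerivAt_iff_tendsto_slope]
  have hslope : Filter.Tendsto (slope f x) (nhdsWithin x {x}ᶜ) (nhds d) :=
    hasDerivAt_iff_tendsto_slope.1 hf
  have hq' : Filter.Tendsto (fun t => q t / (q t + c)) (nhdsWithin x {x}ᶜ)
      (nhds (q x / (q x + c))) :=
    ((hq.div (hq.add continuousAt_const) hne)).tendsto.mono_left nhdsWithin_le_nhds
  have hmul := hq'.mul hslope
  apply hmul.congr'
  have hqpos : ∀ᶠ t in nhds x, 0 < q t + c := by
    have : ContinuousAt (fun t => q t + c) x := hq.add continuousAt_const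
    exact this.eventually_mem (Ioi_mem_nhds (by positivity))
  filter_upwards [nhdsWithin_le_nhds hqpos, self_mem_nhdsWithin] with t htpos htne
  have htx : t ≠ x := htne
  have hG : (q t * f t + c * f x) / (q t + c) - f x = q t * (f t - f x) / (q t + c) := by
    field_simp
    ring
  have hslope_eq : slope (fun t => (q t * f t + c * f x) / (q t + c)) x t =
      ((q t * f t + c * f x) / (q t + c) - (q x * f x + c * f x) / (q x + c)) / (t - x) :=
    slope_def_field _ _ _
  have hGx : (q x * f x + c * f x) / (q x + c) = f x := by
    field_simp
  rw [slope_def_field, slope_def_field, hGx, hG]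
  have htx' : t - x ≠ 0 := sub_ne_zero.2 htx
  have hqt : q t + c ≠ 0 := ne_of_gt htpos
  field_simp

theorem stmt5 (I : Set ℝ) (hIopen : IsOpen I) (hIne : I.Nonempty) (hIconn : I.OrdConnected)
    (f p₁ p₂ : ℝ → ℝ) (i : Fin 2)
    (hf1 : ∀ x ∈ I, DifferentiableAt ℝ f x)
    (hf' : ∀ x ∈ I, deriv f x ≠ 0)
    (hp : ∀ x ∈ I, 0 < p₁ x ∧ 0 < p₂ x)
    (hpc : ContinuousOn (![p₁, p₂] i) I) :
    ∀ x ∈ I, HasDerivAt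
      (fun t => if i = 0 then bajMean I f p₁ p₂ t x else bajMean I f p₁ p₂ x t)
      (![p₁, p₂] i x / (p₁ x + p₂ x)) x := by
  intro x hx
  have hp1 := (hp x hx).1
  have hp2 := (hp x hx).2
  have hd := (hf1 x hx).hasDerivAt
  have hd0 := hf' x hx
  have hinv := hasDerivAt_invFunOn' hIopen hIconn hf1 hf' hx
  fin_cases i
  · -- i = 0
    simp only [Matrix.cons_val_zero] at hpc ⊢
    have hqc : ContinuousAt p₁ x := hpc.continuousAt (hIopen.mem_nhds hx)
    have hG := hasDerivAt_weighted' hd hqc hp1 hp2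
    have hGx : (p₁ x * f x + p₂ x * f x) / (p₁ x + p₂ x) = f x := by
      field_simp
    have hinv' : HasDerivAt (Function.invFunOn f I) (deriv f x)⁻¹
        ((fun t => (p₁ t * f t + p₂ x * f x) / (p₁ t + p₂ x)) x) := by
      simpa [hGx] using hinv
    have hcomp := hinv'.comp x hG
    have heq : (Function.invFunOn f I ∘ fun t => (p₁ t * f t + p₂ x * f x) / (p₁ t + p₂ x)) =
        fun t => bajMean I f p₁ p₂ t x := rfl
    have hderiv : (deriv f x)⁻¹ * (p₁ x / (p₁ x + p₂ x) * deriv f x) =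
        p₁ x / (p₁ x + p₂ x) := by
      field_simp
    rw [heq, hderiv] at hcomp
    simpa using hcomp
  · -- i = 1
    simp only [Matrix.cons_val_one, Matrix.head_cons] at hpc ⊢
    have hqc : ContinuousAt p₂ x := hpc.continuousAt (hIopen.mem_nhds hx)
    have hG := hasDerivAt_weighted' hd hqc hp2 hp1
    have hGx : (p₂ x * f x + p₁ x * f x) / (p₂ x + p₁ x) = f x := by
      field_simp
    have hinv' : HasDerivAt (Function.invFunOn f I) (deriv f x)⁻¹
        ((fun t => (p₂ t * f t + p₁ x * f x) / (p₂ t + p₁ x)) x) := by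
      simpa [hGx] using hinv
    have hcomp := hinv'.comp x hG
    have heq : (Function.invFunOn f I ∘ fun t => (p₂ t * f t + p₁ x * f x) / (p₂ t + p₁ x)) =
        fun t => bajMean I f p₁ p₂ x t := by
      funext t
      simp only [Function.comp_apply, bajMean]
      rw [add_comm (p₁ x * f x), add_comm (p₁ x)]
    have hderiv : (deriv f x)⁻¹ * (p₂ x / (p₂ x + p₁ x) * deriv f x) =
        p₂ x / (p₁ x + p₂ x) := by
      rw [add_comm (p₂ x)]
      field_simp
    rw [heq, hderiv] at hcomp
    simpa using hcomp
end

section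
/- Let I be a nonempty open real interval, let f : I → ℝ be a three times differentiable function on I with nonvanishing first derivative, and let p = (p₁,p₂) : I → ℝ₊² be twice differentiable on I. Then the third-order partial derivative ∂₁²∂₂A_{f,p} exists on I², and at every diagonal point (x,x) with x ∈ I it equals −(1/4)((p₁−p₂)/p₀)'' − (3p₀(p₁−p₂)/(16p₁p₂))·(((p₁−p₂)/p₀)')² − (1/2)·((p₁p₂/p₀²)·((p₁p₂)'/(p₁p₂) + f''/f'))' + (3p₁p₂/(4p₀²))·((p₁−p₂)/p₀)·((p₁p₂)'/(p₁p₂) + f''/f')² − (p₁p₂/(2p₀²))·((p₁−p₂)/p₀)·S(f), evaluated at x, where p₀ := p₁ + p₂. -/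
/-!
Write `A_{f,p} = g ∘ G`, where `g = f⁻¹` (as `invFunOn f I`) and `G(x, y)` is the weighted mean
`(p₁(x) f(x) + p₂(y) f(y)) / (p₁(x) + p₂(y))` of values of `f`. As `f'` is continuous and
nonvanishing, the inverse function theorem makes `g` differentiable on `f(I)` with
`g' = 1/f' ∘ g`, hence `g'' = -f''/f'³ ∘ g` and `g''' = (3f''² - f'''f')/f'⁵ ∘ g`. Differentiating
`(p₁(x) + p₂(y)) G = p₁(x) f(x) + p₂(y) f(y)` expresses each partial derivative of `G` linearly
through the lower ones, and the chain rule gives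
`∂₁²∂₂A = g'''(G) G₁² G₂ + g''(G) (G₁₁ G₂ + 2 G₁ G₁₂) + g'(G) G₁₁₂`.
On the diagonal `G(x, x) = f(x)`, and the claimed formula becomes a rational identity in the
derivatives of `f`, `p₁`, `p₂` at `x`.
-/

open Set

/-- Partial derivative with respect to the first variable. -/
noncomputable def pd1 (M : ℝ → ℝ → ℝ) (x y : ℝ) : ℝ := deriv (fun t => M t y) x

/-- Partial derivative with respect to the second variable. -/
noncomputable def pd2 (M : ℝ → ℝ → ℝ) (x y : ℝ) : ℝ := deriv (fun t => M x t) y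

open Filter Topology Function

theorem HasDerivAt.fun_div' {N D : ℝ → ℝ} {N' D' x : ℝ} (hN : HasDerivAt N N' x)
    (hD : HasDerivAt D D' x) (hx : D x ≠ 0) :
    HasDerivAt (fun t => N t / D t) ((N' - D' * (N x / D x)) / D x) x :=
  (hN.fun_div hD hx).congr_deriv (by field_simp)

theorem HasStrictDerivAt.of_differentiableAt_deriv {f : ℝ → ℝ} {c : ℝ}
    (hf : ∀ᶠ t in 𝓝 c, DifferentiableAt ℝ f t) (hf' : DifferentiableAt ℝ (deriv f) c) :
    HasStrictDerivAt f (deriv f c) c :=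
  hasStrictDerivAt_of_hasDerivAt_of_continuousAt (hf.mono fun _ ht => ht.hasDerivAt)
    hf'.continuousAt

theorem hasDerivAt_deriv_of_eventually {u u' : ℝ → ℝ} {u'' x : ℝ}
    (hu : ∀ᶠ t in 𝓝 x, HasDerivAt u (u' t) t) (hu' : HasDerivAt u' u'' x) :
    HasDerivAt (deriv u) u'' x :=
  hu'.congr_of_eventuallyEq (hu.mono fun _ ht => ht.deriv)

section Derivatives

variable {u v : ℝ → ℝ} {x : ℝ}

theorem hasDerivAt_sub_div_add {u' v' : ℝ} (hu : HasDerivAt u u' x) (hv : HasDerivAt v v' x)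
    (h : u x + v x ≠ 0) :
    HasDerivAt (fun t => (u t - v t) / (u t + v t))
      (2 * (u' * v x - u x * v') / (u x + v x) ^ 2) x :=
  ((hu.fun_sub hv).fun_div (hu.fun_add hv) h).congr_deriv (by ring)

theorem hasDerivAt_deriv_sub_div_add (hu : ∀ᶠ t in 𝓝 x, DifferentiableAt ℝ u t)
    (hv : ∀ᶠ t in 𝓝 x, DifferentiableAt ℝ v t) (hu' : DifferentiableAt ℝ (deriv u) x)
    (hv' : DifferentiableAt ℝ (deriv v) x) (h : ∀ᶠ t in 𝓝 x, u t + v t ≠ 0) :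
    HasDerivAt (deriv fun t => (u t - v t) / (u t + v t))
      (2 * ((deriv (deriv u) x * v x - u x * deriv (deriv v) x) * (u x + v x)
        - 2 * (deriv u x * v x - u x * deriv v x) * (deriv u x + deriv v x))
        / (u x + v x) ^ 3) x := by
  refine hasDerivAt_deriv_of_eventually ((hu.and (hv.and h)).mono fun t ⟨hut, hvt, ht⟩ =>
    hasDerivAt_sub_div_add hut.hasDerivAt hvt.hasDerivAt ht) ?_
  have hux := hu.self_of_nhds.hasDerivAt
  have hvx := hv.self_of_nhds.hasDerivAt
  have hx : u x + v x ≠ 0 := h.self_of_nhds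
  refine ((((hu'.hasDerivAt.fun_mul hvx).fun_sub (hux.fun_mul hv'.hasDerivAt)).const_mul 2).fun_div
    ((hux.fun_add hvx).fun_pow 2) (pow_ne_zero 2 hx)).congr_deriv ?_
  field_simp
  ring

theorem hasDerivAt_deriv_mul (hu : ∀ᶠ t in 𝓝 x, DifferentiableAt ℝ u t)
    (hv : ∀ᶠ t in 𝓝 x, DifferentiableAt ℝ v t) (hu' : DifferentiableAt ℝ (deriv u) x)
    (hv' : DifferentiableAt ℝ (deriv v) x) :
    HasDerivAt (deriv fun t => u t * v t)
      (deriv (deriv u) x * v x + 2 * (deriv u x * deriv v x) + u x * deriv (deriv v) x) x :=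
  hasDerivAt_deriv_of_eventually ((hu.and hv).mono fun _ ⟨hut, hvt⟩ =>
      hut.hasDerivAt.fun_mul hvt.hasDerivAt) <|
    ((hu'.hasDerivAt.fun_mul hv.self_of_nhds.hasDerivAt).fun_add
      (hu.self_of_nhds.hasDerivAt.fun_mul hv'.hasDerivAt)).congr_deriv (by ring)

theorem deriv_div_sq_mul_logDeriv_add_logDeriv {P S h : ℝ → ℝ} (hP : DifferentiableAt ℝ P x)
    (hP' : DifferentiableAt ℝ (deriv P) x) (hS : DifferentiableAt ℝ S x)
    (hh : DifferentiableAt ℝ h x) (hh' : DifferentiableAt ℝ (deriv h) x)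
    (hP0 : P x ≠ 0) (hS0 : S x ≠ 0) (hh0 : h x ≠ 0) :
    deriv (fun t => P t / S t ^ 2 * (deriv P t / P t + deriv h t / h t)) x
      = (deriv P x * S x - 2 * P x * deriv S x) / S x ^ 3 * (deriv P x / P x + deriv h x / h x)
        + P x / S x ^ 2 * ((deriv (deriv P) x * P x - deriv P x ^ 2) / P x ^ 2
          + (deriv (deriv h) x * h x - deriv h x ^ 2) / h x ^ 2) := by
  refine (((hP.hasDerivAt.fun_div (hS.hasDerivAt.fun_pow 2) (pow_ne_zero 2 hS0)).fun_mul
    ((hP'.hasDerivAt.fun_div hP.hasDerivAt hP0).fun_add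
      (hh'.hasDerivAt.fun_div hh.hasDerivAt hh0))).congr_deriv ?_).deriv
  field_simp
  ring

end Derivatives

/- `invDeriv2 f u` and `invDeriv3 f u` are the second and third derivatives of `f⁻¹` at `f u`. -/
noncomputable def invDeriv2 (f : ℝ → ℝ) (u : ℝ) : ℝ :=
  -deriv (deriv f) u / deriv f u ^ 3

noncomputable def invDeriv3 (f : ℝ → ℝ) (u : ℝ) : ℝ :=
  (3 * deriv (deriv f) u ^ 2 - deriv (deriv (deriv f)) u * deriv f u) / deriv f u ^ 5

theorem hasDerivAt_inv_deriv {f : ℝ → ℝ} {u : ℝ} (hf₂ : DifferentiableAt ℝ (deriv f) u)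
    (hf : deriv f u ≠ 0) :
    HasDerivAt (fun v => (deriv f v)⁻¹) (invDeriv2 f u * deriv f u) u :=
  (hf₂.hasDerivAt.fun_inv hf).congr_deriv (by unfold invDeriv2; field_simp)

theorem hasDerivAt_invDeriv2 {f : ℝ → ℝ} {u : ℝ} (hf₂ : DifferentiableAt ℝ (deriv f) u)
    (hf₃ : DifferentiableAt ℝ (deriv (deriv f)) u) (hf : deriv f u ≠ 0) :
    HasDerivAt (invDeriv2 f) (invDeriv3 f u * deriv f u) u :=
  (hf₃.hasDerivAt.fun_neg.fun_div (hf₂.hasDerivAt.fun_pow 3) (pow_ne_zero 3 hf)).congr_deriv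
    (by unfold invDeriv3; field_simp; ring)

section InverseFunction

variable {I : Set ℝ} {f : ℝ → ℝ}

theorem injOn_of_deriv_ne_zero (hI : I.OrdConnected) (hf : ∀ x ∈ I, deriv f x ≠ 0) :
    InjOn f I := by
  intro a ha b hb hab
  by_contra hne
  wlog hlt : a < b generalizing a b
  · exact this hb ha hab.symm (Ne.symm hne) ((Ne.symm hne).lt_of_le (not_lt.1 hlt))
  have hIcc : Icc a b ⊆ I := hI.out ha hb
  obtain ⟨c, hc, hc0⟩ := exists_deriv_eq_zero hlt (fun t ht =>
    (differentiableAt_of_deriv_ne_zero (hf t (hIcc ht))).continuousAt.continuousWithinAt) hab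
  exact hf c (hIcc (Ioo_subset_Icc_self hc)) hc0

variable (hI : IsOpen I) (hinj : InjOn f I) (hfs : ∀ c ∈ I, HasStrictDerivAt f (deriv f c) c)
  (hf : ∀ c ∈ I, deriv f c ≠ 0) {z : ℝ} (hz : z ∈ f '' I)

include hI hinj hfs hf hz

theorem hasDerivAt_invFunOn :
    HasDerivAt (invFunOn f I) (deriv f (invFunOn f I z))⁻¹ z := by
  obtain ⟨c, hc, rfl⟩ := hz
  rw [hinj.leftInvOn_invFunOn hc]
  exact ((hfs c hc).to_local_left_inverse (hf c hc)
    (eventually_of_mem (hI.mem_nhds hc) fun _ ht => hinj.leftInvOn_invFunOn ht)).hasDerivAt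

theorem hasDerivAt_comp_invFunOn {e : ℝ} {d : ℝ → ℝ}
    (hd : HasDerivAt d (e * deriv f (invFunOn f I z)) (invFunOn f I z)) :
    HasDerivAt (fun w => d (invFunOn f I w)) e z := by
  have hne : deriv f (invFunOn f I z) ≠ 0 := by
    obtain ⟨c, hc, rfl⟩ := hz
    rw [hinj.leftInvOn_invFunOn hc]
    exact hf c hc
  exact (hd.comp z (hasDerivAt_invFunOn hI hinj hfs hf hz)).congr_deriv (by field_simp)

theorem hasDerivAt_inv_deriv_invFunOn (hf₂ : ∀ c ∈ I, DifferentiableAt ℝ (deriv f) c) :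
    HasDerivAt (fun w => (deriv f (invFunOn f I w))⁻¹) (invDeriv2 f (invFunOn f I z)) z :=
  hasDerivAt_comp_invFunOn hI hinj hfs hf hz <|
    hasDerivAt_inv_deriv (hf₂ _ (invFunOn_mem hz)) (hf _ (invFunOn_mem hz))

theorem hasDerivAt_invDeriv2_invFunOn (hf₂ : ∀ c ∈ I, DifferentiableAt ℝ (deriv f) c)
    (hf₃ : ∀ c ∈ I, DifferentiableAt ℝ (deriv (deriv f)) c) :
    HasDerivAt (fun w => invDeriv2 f (invFunOn f I w)) (invDeriv3 f (invFunOn f I z)) z :=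
  hasDerivAt_comp_invFunOn hI hinj hfs hf hz <|
    hasDerivAt_invDeriv2 (hf₂ _ (invFunOn_mem hz)) (hf₃ _ (invFunOn_mem hz))
      (hf _ (invFunOn_mem hz))

end InverseFunction

section WeightedMean

variable (f p₁ p₂ : ℝ → ℝ)

noncomputable def weightedMean (x y : ℝ) : ℝ :=
  (p₁ x * f x + p₂ y * f y) / (p₁ x + p₂ y)

noncomputable def weightedMean₁ (x y : ℝ) : ℝ :=
  (deriv p₁ x * (f x - weightedMean f p₁ p₂ x y) + p₁ x * deriv f x) / (p₁ x + p₂ y)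

noncomputable def weightedMean₂ (x y : ℝ) : ℝ :=
  (deriv p₂ y * (f y - weightedMean f p₁ p₂ x y) + p₂ y * deriv f y) / (p₁ x + p₂ y)

noncomputable def weightedMean₁₁ (x y : ℝ) : ℝ :=
  (deriv (deriv p₁) x * (f x - weightedMean f p₁ p₂ x y)
    + 2 * deriv p₁ x * (deriv f x - weightedMean₁ f p₁ p₂ x y)
    + p₁ x * deriv (deriv f) x) / (p₁ x + p₂ y)

noncomputable def weightedMean₁₂ (x y : ℝ) : ℝ :=
  -(deriv p₁ x * weightedMean₂ f p₁ p₂ x y + deriv p₂ y * weightedMean₁ f p₁ p₂ x y)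
    / (p₁ x + p₂ y)

noncomputable def weightedMean₁₁₂ (x y : ℝ) : ℝ :=
  -(deriv (deriv p₁) x * weightedMean₂ f p₁ p₂ x y
      + 2 * deriv p₁ x * weightedMean₁₂ f p₁ p₂ x y
      + deriv p₂ y * weightedMean₁₁ f p₁ p₂ x y) / (p₁ x + p₂ y)

variable {f p₁ p₂} {x y : ℝ}

theorem weightedMean_self (hS : p₁ x + p₂ x ≠ 0) : weightedMean f p₁ p₂ x x = f x := by
  rw [weightedMean, ← add_mul, mul_div_cancel_left₀ _ hS]

theorem weightedMean_mem_image {I : Set ℝ} (hI : I.OrdConnected) (hf : ContinuousOn f I)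
    (hx : x ∈ I) (hy : y ∈ I) (hp₁ : 0 < p₁ x) (hp₂ : 0 < p₂ y) :
    weightedMean f p₁ p₂ x y ∈ f '' I := by
  have hcombo : weightedMean f p₁ p₂ x y ∈ uIcc (f x) (f y) := by
    rw [← segment_eq_uIcc, mem_segment_iff_div]
    refine ⟨p₁ x, p₂ y, hp₁.le, hp₂.le, add_pos hp₁ hp₂, ?_⟩
    rw [weightedMean, smul_eq_mul, smul_eq_mul]
    ring
  exact image_mono (hI.uIcc_subset hx hy)
    (intermediate_value_uIcc (hf.mono (hI.uIcc_subset hx hy)) hcombo)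

theorem hasDerivAt_weightedMean_right (hS : p₁ x + p₂ y ≠ 0)
    (hp₂ : DifferentiableAt ℝ p₂ y) (hf : DifferentiableAt ℝ f y) :
    HasDerivAt (weightedMean f p₁ p₂ x) (weightedMean₂ f p₁ p₂ x y) y :=
  (((hp₂.hasDerivAt.fun_mul hf.hasDerivAt).const_add _).fun_div'
    (hp₂.hasDerivAt.const_add _) hS).congr_deriv (by rw [weightedMean₂, weightedMean]; ring)

theorem hasDerivAt_weightedMean_left (hS : p₁ x + p₂ y ≠ 0)
    (hp₁ : DifferentiableAt ℝ p₁ x) (hf : DifferentiableAt ℝ f x) :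
    HasDerivAt (weightedMean f p₁ p₂ · y) (weightedMean₁ f p₁ p₂ x y) x :=
  (((hp₁.hasDerivAt.fun_mul hf.hasDerivAt).add_const _).fun_div'
    (hp₁.hasDerivAt.add_const _) hS).congr_deriv (by rw [weightedMean₁, weightedMean]; ring)

theorem hasDerivAt_weightedMean₁_left (hS : p₁ x + p₂ y ≠ 0)
    (hp₁ : DifferentiableAt ℝ p₁ x) (hp₁' : DifferentiableAt ℝ (deriv p₁) x)
    (hf : DifferentiableAt ℝ f x) (hf' : DifferentiableAt ℝ (deriv f) x) :
    HasDerivAt (weightedMean₁ f p₁ p₂ · y) (weightedMean₁₁ f p₁ p₂ x y) x :=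
  have hG := hf.hasDerivAt.fun_sub (hasDerivAt_weightedMean_left (p₂ := p₂) hS hp₁ hf)
  (((hp₁'.hasDerivAt.fun_mul hG).fun_add (hp₁.hasDerivAt.fun_mul hf'.hasDerivAt)).fun_div'
    (hp₁.hasDerivAt.add_const _) hS).congr_deriv (by rw [weightedMean₁₁, weightedMean₁]; ring)

theorem hasDerivAt_weightedMean₂_left (hS : p₁ x + p₂ y ≠ 0)
    (hp₁ : DifferentiableAt ℝ p₁ x) (hf : DifferentiableAt ℝ f x) :
    HasDerivAt (weightedMean₂ f p₁ p₂ · y) (weightedMean₁₂ f p₁ p₂ x y) x :=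
  ((((hasDerivAt_weightedMean_left hS hp₁ hf).const_sub _).const_mul _ |>.add_const _).fun_div'
    (hp₁.hasDerivAt.add_const _) hS).congr_deriv (by rw [weightedMean₁₂, weightedMean₂]; ring)

theorem hasDerivAt_weightedMean₁₂_left (hS : p₁ x + p₂ y ≠ 0)
    (hp₁ : DifferentiableAt ℝ p₁ x) (hp₁' : DifferentiableAt ℝ (deriv p₁) x)
    (hf : DifferentiableAt ℝ f x) (hf' : DifferentiableAt ℝ (deriv f) x) :
    HasDerivAt (weightedMean₁₂ f p₁ p₂ · y) (weightedMean₁₁₂ f p₁ p₂ x y) x :=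
  ((((hp₁'.hasDerivAt.fun_mul (hasDerivAt_weightedMean₂_left hS hp₁ hf)).fun_add
    ((hasDerivAt_weightedMean₁_left hS hp₁ hp₁' hf hf').const_mul _)).fun_neg).fun_div'
    (hp₁.hasDerivAt.add_const _) hS).congr_deriv (by rw [weightedMean₁₁₂, weightedMean₁₂]; ring)

end WeightedMean

section ChainRule

variable {I : Set ℝ} {g g₁ g₂ g₃ : ℝ → ℝ} {G G₁ G₂ G₁₁ G₁₂ G₁₁₂ : ℝ → ℝ → ℝ} {x y : ℝ}

theorem hasDerivAt_pd2_comp (hI : IsOpen I) (hx : x ∈ I)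
    (hg : ∀ t ∈ I, HasDerivAt g (g₁ (G t y)) (G t y))
    (hg₁ : HasDerivAt g₁ (g₂ (G x y)) (G x y))
    (hG₂ : ∀ t ∈ I, HasDerivAt (G t) (G₂ t y) y)
    (hG₁ : HasDerivAt (G · y) (G₁ x y) x) (hG₁₂ : HasDerivAt (G₂ · y) (G₁₂ x y) x) :
    HasDerivAt (fun t => pd2 (fun u v => g (G u v)) t y)
      (g₂ (G x y) * G₁ x y * G₂ x y + g₁ (G x y) * G₁₂ x y) x :=
  ((hg₁.comp x hG₁).fun_mul hG₁₂).congr_of_eventuallyEq <|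
    eventually_of_mem (hI.mem_nhds hx) fun t ht => ((hg t ht).comp y (hG₂ t ht)).deriv

theorem hasDerivAt_pd1_pd2_comp (hI : IsOpen I) (hx : x ∈ I)
    (hg : ∀ t ∈ I, HasDerivAt g (g₁ (G t y)) (G t y))
    (hg₁ : ∀ t ∈ I, HasDerivAt g₁ (g₂ (G t y)) (G t y))
    (hg₂ : HasDerivAt g₂ (g₃ (G x y)) (G x y))
    (hG₂ : ∀ t ∈ I, HasDerivAt (G t) (G₂ t y) y)
    (hG₁ : ∀ t ∈ I, HasDerivAt (G · y) (G₁ t y) t) (hG₁₁ : HasDerivAt (G₁ · y) (G₁₁ x y) x)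
    (hG₁₂ : ∀ t ∈ I, HasDerivAt (G₂ · y) (G₁₂ t y) t)
    (hG₁₁₂ : HasDerivAt (G₁₂ · y) (G₁₁₂ x y) x) :
    HasDerivAt (fun t => pd1 (pd2 (fun u v => g (G u v))) t y)
      (g₃ (G x y) * G₁ x y ^ 2 * G₂ x y
        + g₂ (G x y) * (G₁₁ x y * G₂ x y + 2 * G₁ x y * G₁₂ x y)
        + g₁ (G x y) * G₁₁₂ x y) x := by
  have hformula : ∀ t ∈ I, pd1 (pd2 (fun u v => g (G u v))) t y
      = g₂ (G t y) * G₁ t y * G₂ t y + g₁ (G t y) * G₁₂ t y := fun t ht =>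
    (hasDerivAt_pd2_comp hI ht hg (hg₁ t ht) hG₂ (hG₁ t ht) (hG₁₂ t ht)).deriv
  have hderiv := ((((hg₂.comp x (hG₁ x hx)).fun_mul hG₁₁).fun_mul (hG₁₂ x hx)).fun_add
    (((hg₁ x hx).comp x (hG₁ x hx)).fun_mul hG₁₁₂))
  exact (hderiv.congr_deriv (by simp only [comp_apply]; ring)).congr_of_eventuallyEq
    (eventually_of_mem (hI.mem_nhds hx) hformula)

end ChainRule

theorem hasDerivAt_pd1_pd2_bajMean {I : Set ℝ} {f p₁ p₂ : ℝ → ℝ} (hI : IsOpen I)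
    (hIconn : I.OrdConnected) (hf : ∀ x ∈ I, deriv f x ≠ 0)
    (hf₂ : ∀ x ∈ I, DifferentiableAt ℝ (deriv f) x)
    (hf₃ : ∀ x ∈ I, DifferentiableAt ℝ (deriv (deriv f)) x)
    (hp : ∀ x ∈ I, 0 < p₁ x ∧ 0 < p₂ x)
    (hp₁ : ∀ x ∈ I, DifferentiableAt ℝ p₁ x) (hp₁' : ∀ x ∈ I, DifferentiableAt ℝ (deriv p₁) x)
    (hp₂ : ∀ x ∈ I, DifferentiableAt ℝ p₂ x) {x y : ℝ} (hx : x ∈ I) (hy : y ∈ I) :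
    let z := invFunOn f I (weightedMean f p₁ p₂ x y)
    HasDerivAt (fun t => pd1 (pd2 (bajMean I f p₁ p₂)) t y)
      (invDeriv3 f z * weightedMean₁ f p₁ p₂ x y ^ 2 * weightedMean₂ f p₁ p₂ x y
        + invDeriv2 f z * (weightedMean₁₁ f p₁ p₂ x y * weightedMean₂ f p₁ p₂ x y
          + 2 * weightedMean₁ f p₁ p₂ x y * weightedMean₁₂ f p₁ p₂ x y)
        + (deriv f z)⁻¹ * weightedMean₁₁₂ f p₁ p₂ x y) x := by
  have hdiff : ∀ t ∈ I, DifferentiableAt ℝ f t := fun t ht =>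
    differentiableAt_of_deriv_ne_zero (hf t ht)
  have hinj : InjOn f I := injOn_of_deriv_ne_zero hIconn hf
  have hfs : ∀ c ∈ I, HasStrictDerivAt f (deriv f c) c := fun c hc =>
    .of_differentiableAt_deriv (eventually_of_mem (hI.mem_nhds hc) hdiff) (hf₂ c hc)
  have hmem : ∀ t ∈ I, weightedMean f p₁ p₂ t y ∈ f '' I := fun t ht =>
    weightedMean_mem_image hIconn (fun u hu => (hdiff u hu).continuousAt.continuousWithinAt)
      ht hy (hp t ht).1 (hp y hy).2
  have hS : ∀ t ∈ I, p₁ t + p₂ y ≠ 0 := fun t ht => (add_pos (hp t ht).1 (hp y hy).2).ne'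
  exact hasDerivAt_pd1_pd2_comp (g := invFunOn f I)
    (g₁ := fun w => (deriv f (invFunOn f I w))⁻¹) (g₂ := fun w => invDeriv2 f (invFunOn f I w))
    (g₃ := fun w => invDeriv3 f (invFunOn f I w)) hI hx
    (fun t ht => hasDerivAt_invFunOn hI hinj hfs hf (hmem t ht))
    (fun t ht => hasDerivAt_inv_deriv_invFunOn hI hinj hfs hf (hmem t ht) hf₂)
    (hasDerivAt_invDeriv2_invFunOn hI hinj hfs hf (hmem x hx) hf₂ hf₃)
    (fun t ht => hasDerivAt_weightedMean_right (hS t ht) (hp₂ y hy) (hdiff y hy))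
    (fun t ht => hasDerivAt_weightedMean_left (hS t ht) (hp₁ t ht) (hdiff t ht))
    (hasDerivAt_weightedMean₁_left (hS x hx) (hp₁ x hx) (hp₁' x hx) (hdiff x hx) (hf₂ x hx))
    (fun t ht => hasDerivAt_weightedMean₂_left (hS t ht) (hp₁ t ht) (hdiff t ht))
    (hasDerivAt_weightedMean₁₂_left (hS x hx) (hp₁ x hx) (hp₁' x hx) (hdiff x hx) (hf₂ x hx))

theorem stmt7_general (I : Set ℝ) (hIopen : IsOpen I) (hIconn : I.OrdConnected)
    (f p₁ p₂ : ℝ → ℝ)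
    (hf2 : ∀ x ∈ I, DifferentiableAt ℝ (deriv f) x)
    (hf3 : ∀ x ∈ I, DifferentiableAt ℝ (deriv (deriv f)) x)
    (hf' : ∀ x ∈ I, deriv f x ≠ 0)
    (hp : ∀ x ∈ I, 0 < p₁ x ∧ 0 < p₂ x)
    (hp1d : ∀ x ∈ I, DifferentiableAt ℝ p₁ x)
    (hp1d2 : ∀ x ∈ I, DifferentiableAt ℝ (deriv p₁) x)
    (hp2d : ∀ x ∈ I, DifferentiableAt ℝ p₂ x)
    (hp2d2 : ∀ x ∈ I, DifferentiableAt ℝ (deriv p₂) x) :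
    -- the third-order partial derivative `∂₁²∂₂ A_{f,p}` exists on `I²` ...
    (∀ x ∈ I, ∀ y ∈ I,
      DifferentiableAt ℝ (fun t => pd1 (pd2 (bajMean I f p₁ p₂)) t y) x) ∧
    -- ... and at every diagonal point it equals the stated expression
    (∀ x ∈ I, pd1 (pd1 (pd2 (bajMean I f p₁ p₂))) x x =
      -(1 / 4) * deriv (deriv (fun t => (p₁ t - p₂ t) / (p₁ t + p₂ t))) x
      - (3 * (p₁ x + p₂ x) * (p₁ x - p₂ x) / (16 * (p₁ x * p₂ x))) *
          (deriv (fun t => (p₁ t - p₂ t) / (p₁ t + p₂ t)) x) ^ 2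
      - (1 / 2) * deriv (fun t => (p₁ t * p₂ t / (p₁ t + p₂ t) ^ 2) *
          (deriv (fun s => p₁ s * p₂ s) t / (p₁ t * p₂ t) +
            deriv (deriv f) t / deriv f t)) x
      + (3 * (p₁ x * p₂ x) / (4 * (p₁ x + p₂ x) ^ 2)) *
          ((p₁ x - p₂ x) / (p₁ x + p₂ x)) *
          (deriv (fun t => p₁ t * p₂ t) x / (p₁ x * p₂ x) +
            deriv (deriv f) x / deriv f x) ^ 2
      - (p₁ x * p₂ x / (2 * (p₁ x + p₂ x) ^ 2)) *
          ((p₁ x - p₂ x) / (p₁ x + p₂ x)) * schwarzian f x) := by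
  have key := fun x (hx : x ∈ I) y (hy : y ∈ I) =>
    hasDerivAt_pd1_pd2_bajMean hIopen hIconn hf' hf2 hf3 hp hp1d hp1d2 hp2d hx hy
  refine ⟨fun x hx y hy => (key x hx y hy).differentiableAt, fun x hx => ?_⟩
  obtain ⟨hp₁, hp₂⟩ := hp x hx
  have hS : p₁ x + p₂ x ≠ 0 := (add_pos hp₁ hp₂).ne'
  have hI : ∀ᶠ t in 𝓝 x, t ∈ I := hIopen.mem_nhds hx
  have hp₁d : ∀ᶠ t in 𝓝 x, DifferentiableAt ℝ p₁ t := hI.mono hp1d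
  have hp₂d : ∀ᶠ t in 𝓝 x, DifferentiableAt ℝ p₂ t := hI.mono hp2d
  have hP := hasDerivAt_deriv_mul hp₁d hp₂d (hp1d2 x hx) (hp2d2 x hx)
  have hB := deriv_div_sq_mul_logDeriv_add_logDeriv (S := fun t => p₁ t + p₂ t)
    ((hp1d x hx).fun_mul (hp2d x hx)) hP.differentiableAt ((hp1d x hx).fun_add (hp2d x hx))
    (hf2 x hx) (hf3 x hx) (mul_pos hp₁ hp₂).ne' hS (hf' x hx)
  have hr := hasDerivAt_deriv_sub_div_add hp₁d hp₂d (hp1d2 x hx) (hp2d2 x hx)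
    (hI.mono fun t ht => (add_pos (hp t ht).1 (hp t ht).2).ne')
  rw [pd1, (key x hx x hx).deriv, hB, hr.deriv, hP.deriv,
    (hasDerivAt_sub_div_add (hp1d x hx).hasDerivAt (hp2d x hx).hasDerivAt hS).deriv,
    deriv_fun_mul (hp1d x hx) (hp2d x hx), deriv_fun_add (hp1d x hx) (hp2d x hx)]
  have hf'x := hf' x hx
  simp only [weightedMean₁₁₂, weightedMean₁₂, weightedMean₁₁, weightedMean₁, weightedMean₂,
    weightedMean_self hS, (injOn_of_deriv_ne_zero hIconn hf').leftInvOn_invFunOn hx, invDeriv2,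
    invDeriv3, schwarzian]
  field_simp
  ring

theorem stmt7 (I : Set ℝ) (hIopen : IsOpen I) (hIne : I.Nonempty) (hIconn : I.OrdConnected)
    (f p₁ p₂ : ℝ → ℝ)
    (hf1 : ∀ x ∈ I, DifferentiableAt ℝ f x)
    (hf2 : ∀ x ∈ I, DifferentiableAt ℝ (deriv f) x)
    (hf3 : ∀ x ∈ I, DifferentiableAt ℝ (deriv (deriv f)) x)
    (hf' : ∀ x ∈ I, deriv f x ≠ 0)
    (hp : ∀ x ∈ I, 0 < p₁ x ∧ 0 < p₂ x)
    (hp1d : ∀ x ∈ I, DifferentiableAt ℝ p₁ x)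
    (hp1d2 : ∀ x ∈ I, DifferentiableAt ℝ (deriv p₁) x)
    (hp2d : ∀ x ∈ I, DifferentiableAt ℝ p₂ x)
    (hp2d2 : ∀ x ∈ I, DifferentiableAt ℝ (deriv p₂) x) :
    -- the third-order partial derivative `∂₁²∂₂ A_{f,p}` exists on `I²` ...
    (∀ x ∈ I, ∀ y ∈ I,
      DifferentiableAt ℝ (fun t => pd1 (pd2 (bajMean I f p₁ p₂)) t y) x) ∧
    -- ... and at every diagonal point it equals the stated expression
    (∀ x ∈ I, pd1 (pd1 (pd2 (bajMean I f p₁ p₂))) x x =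
      -(1 / 4) * deriv (deriv (fun t => (p₁ t - p₂ t) / (p₁ t + p₂ t))) x
      - (3 * (p₁ x + p₂ x) * (p₁ x - p₂ x) / (16 * (p₁ x * p₂ x))) *
          (deriv (fun t => (p₁ t - p₂ t) / (p₁ t + p₂ t)) x) ^ 2
      - (1 / 2) * deriv (fun t => (p₁ t * p₂ t / (p₁ t + p₂ t) ^ 2) *
          (deriv (fun s => p₁ s * p₂ s) t / (p₁ t * p₂ t) +
            deriv (deriv f) t / deriv f t)) x
      + (3 * (p₁ x * p₂ x) / (4 * (p₁ x + p₂ x) ^ 2)) *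
          ((p₁ x - p₂ x) / (p₁ x + p₂ x)) *
          (deriv (fun t => p₁ t * p₂ t) x / (p₁ x * p₂ x) +
            deriv (deriv f) x / deriv f x) ^ 2
      - (p₁ x * p₂ x / (2 * (p₁ x + p₂ x) ^ 2)) *
          ((p₁ x - p₂ x) / (p₁ x + p₂ x)) * schwarzian f x) :=
  stmt7_general I hIopen hIconn f p₁ p₂ hf2 hf3 hf' hp hp1d hp1d2 hp2d hp2d2
end

section
/- Let I be a nonempty open real interval, let f,g : I → ℝ be differentiable functions on I with nonvanishing first derivatives, let i ∈ {1,2}, and let p = (p₁,p₂) : I → ℝ₊² and q = (q₁,q₂) : I → ℝ₊² be such that p_i and q_i are continuous on I. If ∂_i A_{f,p}(x,x) + ∂_i A_{g,q}(x,x) = 1 for all x ∈ I, then p₁/p₀ = q₂/q₀ and p₂/p₀ = q₁/q₀ on I, where p₀ := p₁+p₂ and q₀ := q₁+q₂; consequently p₁q₁ = p₂q₂ holds on I. -/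
open Set Function Filter Topology

lemma baj_key (I : Set ℝ) (hIopen : IsOpen I) (hIconn : I.OrdConnected)
    (f w : ℝ → ℝ) (hf1 : ∀ x ∈ I, DifferentiableAt ℝ f x) (hf' : ∀ x ∈ I, deriv f x ≠ 0)
    (hwpos : ∀ x ∈ I, 0 < w x) (hwc : ContinuousOn w I)
    {x : ℝ} (hx : x ∈ I) {d : ℝ} (hd : 0 < d) :
    HasDerivAt (fun t => Function.invFunOn f I ((w t * f t + d * f x) / (w t + d)))
      (w x / (w x + d)) x := by
  have hconv : Convex ℝ I := convex_iff_ordConnected.2 hIconn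
  have hfc : ContinuousOn f I := fun t ht => (hf1 t ht).continuousAt.continuousWithinAt
  have hsign := hasDerivWithinAt_forall_lt_or_forall_gt_of_forall_ne (f' := deriv f) hconv
    (fun t ht => (hf1 t ht).hasDerivAt.hasDerivWithinAt) (m := 0) hf'
  have hmono : StrictMonoOn f I ∨ StrictAntiOn f I := by
    rcases hsign with h | h
    · exact Or.inr (strictAntiOn_of_deriv_neg hconv hfc
        (fun t ht => h t (by rwa [hIopen.interior_eq] at ht)))
    · exact Or.inl (strictMonoOn_of_deriv_pos hconv hfc
        (fun t ht => h t (by rwa [hIopen.interior_eq] at ht)))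
  have hinj : InjOn f I := hmono.elim (fun h => h.injOn) (fun h => h.injOn)
  have hφ : ∀ t ∈ I, invFunOn f I (f t) = t := fun t ht => hinj.leftInvOn_invFunOn ht
  -- main local property
  have main : ∀ ε > (0:ℝ), ∃ lo hi : ℝ, lo < f x ∧ f x < hi ∧
      ∀ y ∈ Ioo lo hi, f (invFunOn f I y) = y ∧ |invFunOn f I y - x| < ε := by
    intro ε hε
    obtain ⟨δ, hδ, hball⟩ := Metric.isOpen_iff.1 hIopen x hx
    set r := min δ ε / 2 with hr_def
    have hr : 0 < r := by positivity
    have hrδ : r < δ := by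
      have : min δ ε ≤ δ := min_le_left _ _
      linarith
    have hrε : r < ε := by
      have : min δ ε ≤ ε := min_le_right _ _
      linarith
    set a := x - r with ha_def
    set b := x + r with hb_def
    have ha : a ∈ I := hball (by
      simp only [Metric.mem_ball, Real.dist_eq, ha_def]
      rw [abs_sub_lt_iff]; constructor <;> linarith)
    have hb : b ∈ I := hball (by
      simp only [Metric.mem_ball, Real.dist_eq, hb_def]
      rw [abs_sub_lt_iff]; constructor <;> linarith)
    have hax : a < x := by rw [ha_def]; linarith
    have hxb : x < b := by rw [hb_def]; linarith
    have hab : a ≤ b := by linarith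
    have hsub : Set.uIcc a b ⊆ I := by
      rw [Set.uIcc_of_le hab]
      exact hIconn.out ha hb
    have hbet : min (f a) (f b) < f x ∧ f x < max (f a) (f b) := by
      rcases hmono with h | h
      · exact ⟨min_lt_iff.2 (Or.inl (h ha hx hax)), lt_max_iff.2 (Or.inr (h hx hb hxb))⟩
      · exact ⟨min_lt_iff.2 (Or.inr (h hx hb hxb)), lt_max_iff.2 (Or.inl (h ha hx hax))⟩
    refine ⟨min (f a) (f b), max (f a) (f b), hbet.1, hbet.2, ?_⟩
    intro y hy
    have hy' : y ∈ Set.uIcc (f a) (f b) := by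
      rw [Set.uIcc_eq_union]
      rcases le_total (f a) (f b) with h | h
      · exact Or.inl ⟨by simpa [min_eq_left h] using hy.1.le, by simpa [max_eq_right h] using hy.2.le⟩
      · exact Or.inr ⟨by simpa [min_eq_right h] using hy.1.le, by simpa [max_eq_left h] using hy.2.le⟩
    have := intermediate_value_uIcc (hfc.mono hsub) hy'
    obtain ⟨t, ht, hft⟩ := this
    have htI : t ∈ I := hsub ht
    have hφt : invFunOn f I y = t := by rw [← hft]; exact hφ t htI
    refine ⟨by rw [hφt, hft], ?_⟩
    rw [hφt]
    rw [Set.uIcc_of_le hab] at ht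
    have h1 := ht.1; have h2 := ht.2
    rw [ha_def] at h1; rw [hb_def] at h2
    rw [abs_sub_lt_iff]
    constructor <;> linarith
  have hφx : invFunOn f I (f x) = x := hφ x hx
  have hcont : ContinuousAt (invFunOn f I) (f x) := by
    rw [Metric.continuousAt_iff]
    intro ε hε
    obtain ⟨lo, hi, hlo, hhi, H⟩ := main ε hε
    refine ⟨min (f x - lo) (hi - f x), lt_min (by linarith) (by linarith), ?_⟩
    intro y hy
    have hyI : y ∈ Ioo lo hi := by
      rw [Real.dist_eq, abs_sub_lt_iff] at hy
      constructor
      · have := lt_of_lt_of_le hy.2 (min_le_left _ _); linarith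
      · have := lt_of_lt_of_le hy.1 (min_le_right _ _); linarith
    rw [Real.dist_eq, hφx]
    exact (H y hyI).2
  have hev : ∀ᶠ y in 𝓝 (f x), f (invFunOn f I y) = y := by
    obtain ⟨lo, hi, hlo, hhi, H⟩ := main 1 one_pos
    exact Filter.eventually_of_mem (Ioo_mem_nhds hlo hhi) (fun y hy => (H y hy).1)
  have hφderiv : HasDerivAt (invFunOn f I) (deriv f x)⁻¹ (f x) :=
    HasDerivAt.of_local_left_inverse hcont (by rw [hφx]; exact (hf1 x hx).hasDerivAt)
      (hf' x hx) hev
  have hwx := hwpos x hx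
  have hden : w x + d ≠ 0 := by positivity
  have hh : HasDerivAt (fun t => (w t * f t + d * f x) / (w t + d))
      (deriv f x * (w x / (w x + d))) x := by
    rw [hasDerivAt_iff_tendsto_slope]
    have hwcx : ContinuousAt w x := hwc.continuousAt (hIopen.mem_nhds hx)
    have h1 : Tendsto (fun t => w t / (w t + d)) (𝓝[≠] x) (𝓝 (w x / (w x + d))) :=
      ((hwcx.div (hwcx.add continuousAt_const) hden)).tendsto.mono_left nhdsWithin_le_nhds
    have h2 : Tendsto (slope f x) (𝓝[≠] x) (𝓝 (deriv f x)) :=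
      hasDerivAt_iff_tendsto_slope.1 (hf1 x hx).hasDerivAt
    have h3 : Tendsto (fun t => w t / (w t + d) * slope f x t) (𝓝[≠] x)
        (𝓝 (deriv f x * (w x / (w x + d)))) := by
      rw [mul_comm]; exact h1.mul h2
    refine h3.congr' ?_
    have hI' : ∀ᶠ t in 𝓝[≠] x, t ∈ I :=
      eventually_nhdsWithin_of_eventually_nhds (hIopen.eventually_mem hx)
    filter_upwards [hI', self_mem_nhdsWithin] with t htI htx
    have hwt : 0 < w t := hwpos t htI
    have hdent : w t + d ≠ 0 := by positivity
    have hxt : x - t ≠ 0 := sub_ne_zero.2 (Ne.symm htx)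
    have hhx : (w x * f x + d * f x) / (w x + d) = f x := by field_simp
    have key : (w t * f t + d * f x) / (w t + d) - f x = w t * (f t - f x) / (w t + d) := by
      field_simp; ring
    rw [slope_def_field, slope_def_field, hhx, key]
    ring
  have hval : (w x * f x + d * f x) / (w x + d) = f x := by
    field_simp
  have hg' : HasDerivAt (invFunOn f I) (deriv f x)⁻¹ ((w x * f x + d * f x) / (w x + d)) := by
    rw [hval]; exact hφderiv
  have hcomp := hg'.comp x hh
  have : (deriv f x)⁻¹ * (deriv f x * (w x / (w x + d))) = w x / (w x + d) := by
    rw [← mul_assoc, inv_mul_cancel₀ (hf' x hx), one_mul]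
  rw [this] at hcomp
  exact hcomp

theorem stmt9 (I : Set ℝ) (hIopen : IsOpen I) (hIne : I.Nonempty) (hIconn : I.OrdConnected)
    (f g p₁ p₂ q₁ q₂ : ℝ → ℝ) (i : Fin 2)
    (hf1 : ∀ x ∈ I, DifferentiableAt ℝ f x) (hf' : ∀ x ∈ I, deriv f x ≠ 0)
    (hg1 : ∀ x ∈ I, DifferentiableAt ℝ g x) (hg' : ∀ x ∈ I, deriv g x ≠ 0)
    (hp : ∀ x ∈ I, 0 < p₁ x ∧ 0 < p₂ x)
    (hq : ∀ x ∈ I, 0 < q₁ x ∧ 0 < q₂ x)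
    (hpc : ContinuousOn (![p₁, p₂] i) I)
    (hqc : ContinuousOn (![q₁, q₂] i) I)
    (hsum : ∀ x ∈ I,
      (if i = 0 then pd1 (bajMean I f p₁ p₂) x x else pd2 (bajMean I f p₁ p₂) x x) +
      (if i = 0 then pd1 (bajMean I g q₁ q₂) x x else pd2 (bajMean I g q₁ q₂) x x) = 1) :
    ∀ x ∈ I,
      p₁ x / (p₁ x + p₂ x) = q₂ x / (q₁ x + q₂ x) ∧
      p₂ x / (p₁ x + p₂ x) = q₁ x / (q₁ x + q₂ x) ∧
      p₁ x * q₁ x = p₂ x * q₂ x := by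
  intro x hx
  obtain ⟨hp1, hp2⟩ := hp x hx
  obtain ⟨hq1, hq2⟩ := hq x hx
  have hp0 : (0:ℝ) < p₁ x + p₂ x := by linarith
  have hq0 : (0:ℝ) < q₁ x + q₂ x := by linarith
  have hs := hsum x hx
  fin_cases i
  · -- i = 0
    simp only [Matrix.cons_val_zero] at hpc hqc
    simp only [Fin.zero_eta, Fin.isValue, if_true, reduceIte] at hs
    have hA : pd1 (bajMean I f p₁ p₂) x x = p₁ x / (p₁ x + p₂ x) :=
      (baj_key I hIopen hIconn f p₁ hf1 hf' (fun t ht => (hp t ht).1) hpc hx hp2).deriv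
    have hB : pd1 (bajMean I g q₁ q₂) x x = q₁ x / (q₁ x + q₂ x) :=
      (baj_key I hIopen hIconn g q₁ hg1 hg' (fun t ht => (hq t ht).1) hqc hx hq2).deriv
    rw [hA, hB] at hs
    rw [div_add_div _ _ hp0.ne' hq0.ne', div_eq_one_iff_eq (by positivity)] at hs
    refine ⟨?_, ?_, ?_⟩
    · rw [div_eq_div_iff hp0.ne' hq0.ne']; linear_combination hs
    · rw [div_eq_div_iff hp0.ne' hq0.ne']; linear_combination -hs
    · linear_combination hs
  · -- i = 1
    simp only [Matrix.cons_val_one, Matrix.head_cons] at hpc hqc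
    simp only [Fin.mk_one, Fin.isValue, reduceIte] at hs
    have hfunp : (fun t => bajMean I f p₁ p₂ x t) =
        (fun t => Function.invFunOn f I ((p₂ t * f t + p₁ x * f x) / (p₂ t + p₁ x))) := by
      funext t; simp only [bajMean]; rw [add_comm (p₁ x * f x), add_comm (p₁ x)]
    have hfunq : (fun t => bajMean I g q₁ q₂ x t) =
        (fun t => Function.invFunOn g I ((q₂ t * g t + q₁ x * g x) / (q₂ t + q₁ x))) := by
      funext t; simp only [bajMean]; rw [add_comm (q₁ x * g x), add_comm (q₁ x)]
    have hA : pd2 (bajMean I f p₁ p₂) x x = p₂ x / (p₂ x + p₁ x) := by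
      rw [pd2, hfunp]
      exact (baj_key I hIopen hIconn f p₂ hf1 hf' (fun t ht => (hp t ht).2) hpc hx hp1).deriv
    have hB : pd2 (bajMean I g q₁ q₂) x x = q₂ x / (q₂ x + q₁ x) := by
      rw [pd2, hfunq]
      exact (baj_key I hIopen hIconn g q₂ hg1 hg' (fun t ht => (hq t ht).2) hqc hx hq1).deriv
    rw [hA, hB] at hs
    rw [if_neg (by decide), if_neg (by decide)] at hs
    have hp0' : (0:ℝ) < p₂ x + p₁ x := by linarith
    have hq0' : (0:ℝ) < q₂ x + q₁ x := by linarith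
    rw [div_add_div _ _ hp0'.ne' hq0'.ne', div_eq_one_iff_eq (by positivity)] at hs
    refine ⟨?_, ?_, ?_⟩
    · rw [div_eq_div_iff hp0.ne' hq0.ne']; linear_combination -hs
    · rw [div_eq_div_iff hp0.ne' hq0.ne']; linear_combination hs
    · linear_combination -hs
end
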